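/- arXiv:1102.4782 — 7 statements merged into one kernel-verified Lean document; each statement's English description precedes it below -/
import Mathlib

section
/- Let P(z) be a nonzero polynomial, K ⊂ ℂ compact, a > 0, and let p, q be positive integers with p > deg P + q. Then there exist c, d ∈ ℂ \ {0} such that the rational function R(z) = P(z) + d z^p / (1 − (c z)^q) satisfies: (i) 1 − (c z)^q ≠ 0 for all z ∈ K; (ii) sup_{z∈K} |P(z) − R(z)| < a; (iii) the Taylor coefficients β_ν of R at 0 satisfy β_ν = ε_ν for all ν ≤ deg P, where P(z) = Σ ε_ν z^ν. -/
/-!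
Let `M` bound `K` and put `c = 1 / (2M)`, so that `‖(c z) ^ q‖ ≤ 1 / 2` on `K`; the added term is
then at most `2 ‖d‖ M ^ p` on `K`, which is small for small `d`. Near `0`,
`d z ^ p / (1 - (c z) ^ q) = ∑ₖ d c ^ (q k) z ^ (p + q k)` has only monomials of degree
`≥ p > deg P`, so the Taylor coefficients of `R` up to `deg P` are those of `P`.
-/

open FormalMultilinearSeries
open scoped NNReal

section PowerSeries

variable {𝕜 : Type*} [NontriviallyNormedField 𝕜]

theorem Polynomial.hasSum_coeff_mul_pow (P : Polynomial 𝕜) (z : 𝕜) :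
    HasSum (fun n => P.coeff n * z ^ n) (P.eval z) := by
  rw [P.eval_eq_sum, Polynomial.sum_def]
  exact hasSum_sum_of_ne_finset_zero fun n hn => by
    simp [Polynomial.notMem_support_iff.mp hn]

theorem Polynomial.summable_norm_coeff_mul_pow (P : Polynomial 𝕜) (r : ℝ) :
    Summable fun n => ‖P.coeff n‖ * r ^ n :=
  summable_of_ne_finset_zero (s := P.support) fun n hn => by
    simp [Polynomial.notMem_support_iff.mp hn]

theorem hasFPowerSeriesOnBall_ofScalars_of_hasSum {b : ℕ → 𝕜} {f : 𝕜 → 𝕜} {r : ℝ≥0}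
    (hr : 0 < r) (hb : Summable fun n => ‖b n‖ * (r : ℝ) ^ n)
    (hf : ∀ z : 𝕜, ‖z‖ < r → HasSum (fun n => b n * z ^ n) (f z)) :
    HasFPowerSeriesOnBall f (ofScalars 𝕜 b) 0 r where
  r_le := le_radius_of_summable_norm _ <| by simpa only [ofScalars_norm] using hb
  r_pos := by exact_mod_cast hr
  hasSum {z} hz := by
    simpa only [ofScalars_apply_eq, smul_eq_mul, zero_add] using hf z (by simpa using hz)

/-- The Taylor coefficients of `z ↦ d * z ^ p / (1 - (c * z) ^ q)` at `0`. -/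
def shiftedGeomCoeff (d c : 𝕜) (p q n : ℕ) : 𝕜 :=
  if p ≤ n ∧ q ∣ n - p then d * c ^ (n - p) else 0

theorem shiftedGeomCoeff_of_lt {d c : 𝕜} {p q n : ℕ} (h : n < p) :
    shiftedGeomCoeff d c p q n = 0 :=
  if_neg fun h' => h.not_ge h'.1

theorem norm_shiftedGeomCoeff (d c : 𝕜) (p q n : ℕ) :
    ‖shiftedGeomCoeff d c p q n‖ = shiftedGeomCoeff ‖d‖ ‖c‖ p q n := by
  unfold shiftedGeomCoeff
  split_ifs <;> simp

theorem hasSum_shiftedGeomCoeff [CompleteSpace 𝕜] {d c z : 𝕜} {p q : ℕ} (hq : q ≠ 0)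
    (hcz : ‖c * z‖ < 1) :
    HasSum (fun n => shiftedGeomCoeff d c p q n * z ^ n) (d * z ^ p / (1 - (c * z) ^ q)) := by
  have hinj : Function.Injective fun k => p + q * k := fun k l h => by
    simpa [hq] using h
  have hsupp : ∀ n ∉ Set.range fun k => p + q * k, shiftedGeomCoeff d c p q n * z ^ n = 0 := by
    intro n hn
    rw [shiftedGeomCoeff, if_neg, zero_mul]
    rintro ⟨hpn, k, hk⟩
    exact hn ⟨k, by simp only; omega⟩
  rw [← hinj.hasSum_iff hsupp]
  have hczq : ‖(c * z) ^ q‖ < 1 := by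
    rw [norm_pow]
    exact pow_lt_one₀ (norm_nonneg _) hcz hq
  have hterm : ∀ k, shiftedGeomCoeff d c p q (p + q * k) * z ^ (p + q * k)
      = d * z ^ p * ((c * z) ^ q) ^ k := fun k => by
    simp only [shiftedGeomCoeff, le_add_iff_nonneg_right, zero_le, add_tsub_cancel_left,
      dvd_mul_right, and_self, if_true, pow_add, pow_mul, mul_pow]
    ring
  simpa only [Function.comp_def, hterm, div_eq_mul_inv]
    using (hasSum_geometric_of_norm_lt_one hczq).mul_left (d * z ^ p)

theorem hasFPowerSeriesAt_add_div_one_sub [CompleteSpace 𝕜] (P : Polynomial 𝕜) (d c : 𝕜)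
    {p q : ℕ} (hq : q ≠ 0) :
    HasFPowerSeriesAt (fun z => P.eval z + d * z ^ p / (1 - (c * z) ^ q))
      (ofScalars 𝕜 (fun n => P.coeff n + shiftedGeomCoeff d c p q n)) 0 := by
  set r : ℝ≥0 := (‖c‖₊ + 1)⁻¹
  have hr : 0 < r := by positivity
  have hcr : ‖c‖ * r < 1 := by
    rw [NNReal.coe_inv, ← div_eq_mul_inv]
    exact (div_lt_one (by positivity)).2 (by simp)
  have hcz : ∀ z : 𝕜, ‖z‖ < r → ‖c * z‖ < 1 := fun z hz =>
    (norm_mul_le c z).trans_lt <| (mul_le_mul_of_nonneg_left hz.le (norm_nonneg c)).trans_lt hcr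
  have hgeom : Summable fun n => ‖shiftedGeomCoeff d c p q n‖ * (r : ℝ) ^ n := by
    simp only [norm_shiftedGeomCoeff]
    exact (hasSum_shiftedGeomCoeff hq (by simpa using hcr)).summable
  refine ⟨r, hasFPowerSeriesOnBall_ofScalars_of_hasSum hr ?_ fun z hz => ?_⟩
  · refine ((P.summable_norm_coeff_mul_pow r).add hgeom).of_nonneg_of_le (fun n => by positivity)
      fun n => ?_
    rw [← add_mul]
    gcongr
    exact norm_add_le _ _
  · simpa only [add_mul] using
      (P.hasSum_coeff_mul_pow z).add (hasSum_shiftedGeomCoeff hq (hcz z hz))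

end PowerSeries

section NormBounds

variable {𝕜 : Type*} [NormedDivisionRing 𝕜]

theorem half_le_norm_one_sub_pow {w : 𝕜} {q : ℕ} (hq : q ≠ 0) (hw : ‖w‖ ≤ 1 / 2) :
    1 / 2 ≤ ‖1 - w ^ q‖ := by
  have hwq : ‖w ^ q‖ ≤ 1 / 2 := by
    rw [norm_pow]
    exact (pow_le_of_le_one (norm_nonneg w) (hw.trans (by norm_num)) hq).trans hw
  have := norm_sub_norm_le (1 : 𝕜) (w ^ q)
  rw [norm_one] at this
  linarith

theorem norm_mul_pow_div_one_sub_pow_le (d z : 𝕜) {w : 𝕜} (p : ℕ) {q : ℕ} (hq : q ≠ 0)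
    (hw : ‖w‖ ≤ 1 / 2) : ‖d * z ^ p / (1 - w ^ q)‖ ≤ 2 * ‖d‖ * ‖z‖ ^ p := by
  have hden := half_le_norm_one_sub_pow hq hw
  rw [norm_div, norm_mul, norm_pow, div_le_iff₀ (by linarith)]
  nlinarith [mul_nonneg (norm_nonneg d) (pow_nonneg (norm_nonneg z) p)]

end NormBounds

theorem lemma_2_3_general (P : Polynomial ℂ) (K : Set ℂ) (hK : IsCompact K)
    (a : ℝ) (ha : 0 < a) (p q : ℕ) (hq : 1 ≤ q)
    (hpq : P.natDegree + q < p) :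
    ∃ c d : ℂ, c ≠ 0 ∧ d ≠ 0 ∧
      (∀ z ∈ K, 1 - (c * z) ^ q ≠ 0) ∧
      (∀ z ∈ K, ‖P.eval z - (P.eval z + d * z ^ p / (1 - (c * z) ^ q))‖ < a) ∧
      ∃ ps : FormalMultilinearSeries ℂ ℂ ℂ,
        HasFPowerSeriesAt (fun z => P.eval z + d * z ^ p / (1 - (c * z) ^ q)) ps 0 ∧
        ∀ ν ≤ P.natDegree, ps.coeff ν = P.coeff ν := by
  have hq₀ : q ≠ 0 := by omega
  obtain ⟨M, hM, hMK⟩ := hK.isBounded.exists_pos_norm_le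
  set c : ℂ := (((2 * M)⁻¹ : ℝ) : ℂ)
  set d : ℂ := ((a / (4 * M ^ p) : ℝ) : ℂ)
  have hd : ‖d‖ = a / (4 * M ^ p) := by
    rw [Complex.norm_real, Real.norm_of_nonneg (by positivity)]
  have hcz : ∀ z ∈ K, ‖c * z‖ ≤ 1 / 2 := fun z hz => by
    rw [norm_mul, Complex.norm_real, Real.norm_of_nonneg (by positivity)]
    calc (2 * M)⁻¹ * ‖z‖ ≤ (2 * M)⁻¹ * M := by gcongr; exact hMK z hz
      _ = 1 / 2 := by field_simp
  refine ⟨c, d, by simpa [c] using hM.ne', by simp [d, ha.ne', hM.ne'], fun z hz => ?_,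
    fun z hz => ?_, _, hasFPowerSeriesAt_add_div_one_sub P d c hq₀, fun ν hν => ?_⟩
  · exact norm_pos_iff.mp (by linarith [half_le_norm_one_sub_pow hq₀ (hcz z hz)])
  · rw [sub_add_cancel_left, norm_neg]
    calc ‖d * z ^ p / (1 - (c * z) ^ q)‖ ≤ 2 * ‖d‖ * ‖z‖ ^ p :=
          norm_mul_pow_div_one_sub_pow_le d z p hq₀ (hcz z hz)
      _ ≤ 2 * ‖d‖ * M ^ p := by gcongr; exact hMK z hz
      _ = a / 2 := by rw [hd]; field_simp; ring
      _ < a := by linarith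
  · simp [coeff_ofScalars, shiftedGeomCoeff_of_lt (by omega : ν < p)]

theorem lemma_2_3 (P : Polynomial ℂ) (hP : P ≠ 0) (K : Set ℂ) (hK : IsCompact K)
    (a : ℝ) (ha : 0 < a) (p q : ℕ) (hp : 1 ≤ p) (hq : 1 ≤ q)
    (hpq : P.natDegree + q < p) :
    ∃ c d : ℂ, c ≠ 0 ∧ d ≠ 0 ∧
      (∀ z ∈ K, 1 - (c * z) ^ q ≠ 0) ∧
      (∀ z ∈ K, ‖P.eval z - (P.eval z + d * z ^ p / (1 - (c * z) ^ q))‖ < a) ∧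
      ∃ ps : FormalMultilinearSeries ℂ ℂ ℂ,
        HasFPowerSeriesAt (fun z => P.eval z + d * z ^ p / (1 - (c * z) ^ q)) ps 0 ∧
        ∀ ν ≤ P.natDegree, ps.coeff ν = P.coeff ν :=
  lemma_2_3_general P K hK a ha p q hq hpq
end

section
/- Let P̃(z) = Σ_{ν=0}^N ε_ν z^ν be a nonzero polynomial, K ⊂ ℂ compact, a > 0, and let p, q be positive integers with p, q > deg P̃. Then there exist c, d ∈ ℂ \ {0} such that the rational function R(z) = (P̃(z) + d z^p)/(1 − (c z)^q) satisfies: (i) 1 − (c z)^q ≠ 0 for all z ∈ K; (ii) sup_{z∈K} |P̃(z) − R(z)| < a; (iii) the Taylor coefficients β_ν of R around 0 satisfy β_ν = ε_ν for all ν ≤ deg P̃. -/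
/-!
As `(c, d) → 0` the rational function `R` tends to `P` uniformly on `K`: the error is jointly
continuous in `(c, d, z)` and vanishes at `c = d = 0`, so compactness of `K` yields small nonzero
`c, d` with (i) and (ii). For (iii), since `p, q > N = deg P`, near `0` we can write
`R = P + z ^ (N + 1) * g` with `g = (d z ^ (p - N - 1) + c ^ q P z ^ (q - N - 1)) / (1 - (c z) ^ q)`
analytic at `0`; multiplying by `z ^ (N + 1)` only shifts the power series of `g`, so the
coefficients of `R` of degree `≤ N` are those of `P`.
-/

open Polynomial Filter Topology FormalMultilinearSeries

theorem Filter.Eventually.exists_fst_ne_snd_ne {X Y : Type*} [TopologicalSpace X]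
    [TopologicalSpace Y] {x : X} {y : Y} [(𝓝[≠] x).NeBot] [(𝓝[≠] y).NeBot] {P : X × Y → Prop}
    (h : ∀ᶠ w in 𝓝 (x, y), P w) :
    ∃ a b, a ≠ x ∧ b ≠ y ∧ P (a, b) := by
  rw [nhds_prod_eq] at h
  obtain ⟨⟨a, b⟩, ⟨ha, hb⟩, hP⟩ :=
    (((eventually_mem_nhdsWithin (s := {x}ᶜ)).prod_mk
      (eventually_mem_nhdsWithin (s := {y}ᶜ))).and
      (h.filter_mono (prod_mono nhdsWithin_le_nhds nhdsWithin_le_nhds))).exists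
  exact ⟨a, b, ha, hb, hP⟩

variable {𝕜 : Type*} [NontriviallyNormedField 𝕜]

theorem Polynomial.hasFPowerSeriesAt_ofScalars_coeff (P : 𝕜[X]) :
    HasFPowerSeriesAt (fun z => P.eval z) (ofScalars 𝕜 P.coeff) 0 := by
  refine hasFPowerSeriesAt_iff.mpr (.of_forall fun z => ?_)
  have hsupp : ∀ n ∉ Finset.range (P.natDegree + 1), z ^ n • (ofScalars 𝕜 P.coeff).coeff n = 0 :=
    fun n hn => by
      rw [coeff_ofScalars, P.coeff_eq_zero_of_natDegree_lt (by simpa using hn), smul_zero]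
  simpa [eval_eq_sum_range, mul_comm] using hasSum_sum_of_ne_finset_zero hsupp

theorem HasFPowerSeriesAt.pow_mul {g : 𝕜 → 𝕜} {s : FormalMultilinearSeries 𝕜 𝕜 𝕜}
    (hg : HasFPowerSeriesAt g s 0) (m : ℕ) :
    HasFPowerSeriesAt (fun z => z ^ m * g z)
      (ofScalars 𝕜 fun n => if n < m then 0 else s.coeff (n - m)) 0 := by
  refine hasFPowerSeriesAt_iff.mpr ?_
  filter_upwards [hasFPowerSeriesAt_iff.mp hg] with z hz
  rw [zero_add] at hz ⊢
  refine (hasSum_nat_add_iff' m).mp ?_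
  simp only [coeff_ofScalars, smul_eq_mul]
  rw [Finset.sum_eq_zero fun n hn => by simp [Finset.mem_range.mp hn], sub_zero]
  simp only [add_lt_iff_neg_right, not_lt_zero, if_false, Nat.add_sub_cancel]
  exact (hz.mul_left (z ^ m)).congr_fun fun n => by rw [smul_eq_mul, pow_add]; ring

theorem exists_hasFPowerSeriesAt_coeff_eq_of_eventuallyEq {f g : 𝕜 → 𝕜} (P : 𝕜[X]) (m : ℕ)
    (hg : AnalyticAt 𝕜 g 0) (hf : f =ᶠ[𝓝 0] fun z => P.eval z + z ^ m * g z) :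
    ∃ ps : FormalMultilinearSeries 𝕜 𝕜 𝕜, HasFPowerSeriesAt f ps 0 ∧
      ∀ ν < m, ps.coeff ν = P.coeff ν := by
  obtain ⟨s, hs⟩ := hg
  have hsum := P.hasFPowerSeriesAt_ofScalars_coeff.add (hs.pow_mul m)
  rw [← ofScalars_add] at hsum
  exact ⟨_, hsum.congr hf.symm, fun ν hν => by simp [hν]⟩

theorem exists_hasFPowerSeriesAt_div_one_sub_pow (P : 𝕜[X]) (c d : 𝕜) {m p q : ℕ}
    (hp : m ≤ p) (hq : m ≤ q) (hq0 : q ≠ 0) :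
    ∃ ps : FormalMultilinearSeries 𝕜 𝕜 𝕜,
      HasFPowerSeriesAt (fun z => (P.eval z + d * z ^ p) / (1 - (c * z) ^ q)) ps 0 ∧
      ∀ ν < m, ps.coeff ν = P.coeff ν := by
  have h0 : (1 : 𝕜) - (c * 0) ^ q ≠ 0 := by simp [hq0]
  have hden : ∀ᶠ z in 𝓝 0, 1 - (c * z) ^ q ≠ 0 :=
    (by fun_prop : Continuous fun z : 𝕜 => 1 - (c * z) ^ q).continuousAt.eventually_ne h0
  obtain ⟨p, rfl⟩ := Nat.exists_eq_add_of_le hp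
  obtain ⟨q, rfl⟩ := Nat.exists_eq_add_of_le hq
  have hP := AnalyticOnNhd.eval_polynomial (𝕜 := 𝕜) P 0 (Set.mem_univ 0)
  refine exists_hasFPowerSeriesAt_coeff_eq_of_eventuallyEq P m
    (g := fun z => (d * z ^ p + c ^ (m + q) * P.eval z * z ^ q) / (1 - (c * z) ^ (m + q)))
    (by fun_prop (disch := exact h0)) ?_
  filter_upwards [hden] with z hz
  field_simp
  ring

theorem eventually_forall_mem_norm_sub_div_one_sub_pow_lt (P : 𝕜[X]) {K : Set 𝕜} (hK : IsCompact K)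
    {a : ℝ} (ha : 0 < a) (p : ℕ) {q : ℕ} (hq : q ≠ 0) :
    ∀ᶠ cd : 𝕜 × 𝕜 in 𝓝 0, ∀ z ∈ K, 1 - (cd.1 * z) ^ q ≠ 0 ∧
      ‖P.eval z - (P.eval z + cd.2 * z ^ p) / (1 - (cd.1 * z) ^ q)‖ < a := by
  refine hK.eventually_forall_of_forall_eventually fun z _ => ?_
  have hden : ContinuousAt (fun x : (𝕜 × 𝕜) × 𝕜 => 1 - (x.1.1 * x.2) ^ q) (0, z) := by fun_prop
  have herr : ContinuousAt (fun x : (𝕜 × 𝕜) × 𝕜 =>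
      ‖P.eval x.2 - (P.eval x.2 + x.1.2 * x.2 ^ p) / (1 - (x.1.1 * x.2) ^ q)‖) (0, z) := by
    fun_prop (disch := simp [hq])
  exact (hden.eventually_ne (by simp [hq])).and
    (herr.eventually_lt continuousAt_const (by simpa [hq] using ha))

theorem lemma_2_4_general (P : Polynomial ℂ) (K : Set ℂ) (hK : IsCompact K)
    (a : ℝ) (ha : 0 < a) (p q : ℕ) (hp : P.natDegree < p) (hq : P.natDegree < q) :
    ∃ c d : ℂ, c ≠ 0 ∧ d ≠ 0 ∧
      (∀ z ∈ K, 1 - (c * z) ^ q ≠ 0) ∧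
      (∀ z ∈ K, ‖P.eval z - (P.eval z + d * z ^ p) / (1 - (c * z) ^ q)‖ < a) ∧
      ∃ ps : FormalMultilinearSeries ℂ ℂ ℂ,
        HasFPowerSeriesAt (fun z => (P.eval z + d * z ^ p) / (1 - (c * z) ^ q)) ps 0 ∧
        ∀ ν ≤ P.natDegree, ps.coeff ν = P.coeff ν := by
  have hq0 : q ≠ 0 := by omega
  obtain ⟨c, d, hc, hd, hcd⟩ :=
    (eventually_forall_mem_norm_sub_div_one_sub_pow_lt P hK ha p hq0).exists_fst_ne_snd_ne
  obtain ⟨ps, hps, hcoeff⟩ := exists_hasFPowerSeriesAt_div_one_sub_pow P c d hp hq hq0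
  exact ⟨c, d, hc, hd, fun z hz => (hcd z hz).1, fun z hz => (hcd z hz).2,
    ps, hps, fun ν hν => hcoeff ν (Nat.lt_succ_of_le hν)⟩

theorem lemma_2_4 (P : Polynomial ℂ) (hP : P ≠ 0) (K : Set ℂ) (hK : IsCompact K)
    (a : ℝ) (ha : 0 < a) (p q : ℕ) (hp : P.natDegree < p) (hq : P.natDegree < q) :
    ∃ c d : ℂ, c ≠ 0 ∧ d ≠ 0 ∧
      (∀ z ∈ K, 1 - (c * z) ^ q ≠ 0) ∧
      (∀ z ∈ K, ‖P.eval z - (P.eval z + d * z ^ p) / (1 - (c * z) ^ q)‖ < a) ∧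
      ∃ ps : FormalMultilinearSeries ℂ ℂ ℂ,
        HasFPowerSeriesAt (fun z => (P.eval z + d * z ^ p) / (1 - (c * z) ^ q)) ps 0 ∧
        ∀ ν ≤ P.natDegree, ps.coeff ν = P.coeff ν :=
  lemma_2_4_general P K hK a ha p q hp hq
end

section
/- Let K ⊂ ℂ be compact with 0 ∉ K and with connected complement K^c. Let D̄ be a closed disk centered at 0 with radius r > 0 such that D̄ ∩ K = ∅. Let P(z) and Q(z) be polynomials. Then for every ε > 0 there exists a polynomial P̃(z) such that: (i) sup_{z∈D̄} |P̃(z) − P(z)| < ε; (ii) sup_{z∈K} |P̃(z) − Q(z)| < ε; (iii) some partial sum of P̃ (i.e., the truncation of P̃ to degrees < λ for some λ > deg P) is exactly P. -/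
/-!
Writing `P̃ = P + z^λ Π`, it suffices to make `z^λ Π` small on the disk and close to `Q - P` on
`K`. Pick `r < ρ < dist(0, K)`. The rational functions `z^n / (z^n - ρ^n)` tend to `0` uniformly
on the disk and to `1` uniformly on `K`, so for large `n ≥ λ` it is enough to approximate
`z^λ · (Q - P)(z) z^(n-λ) / (z^n - ρ^n)` by `z^λ Π` uniformly on `L = D̄ ∪ K`.

This is Runge's theorem for poles on the circle `|w| = ρ`. Let `A` be the closure of the
polynomials in `C(L, ℂ)`. A point of the spectrum of `z` in `A` that is not in `L` has a bounded
component in `Lᶜ`, while every point of the circle has an unbounded one, because `Kᶜ` is connected.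
By spectral mapping `z^n - ρ^n` is then invertible in `A`.
-/

open Polynomial Metric Set Bornology Filter Topology

theorem not_isBounded_connectedComponentIn_compl {E : Type*} [NormedAddCommGroup E]
    [NormedSpace ℝ E] (hE : 1 < Module.rank ℝ E) {B K : Set E} {c w : E} {ρ : ℝ}
    (hB : IsClosed B) (hK : IsCompact K) (hKc : IsPreconnected Kᶜ) (hBρ : B ⊆ ball c ρ)
    (hKρ : Disjoint (sphere c ρ) K) (hw : w ∈ sphere c ρ) :
    ¬ IsBounded (connectedComponentIn (B ∪ K)ᶜ w) := by
  set C := connectedComponentIn (B ∪ K)ᶜ w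
  have hsphere : sphere c ρ ⊆ (B ∪ K)ᶜ := fun z hz hzBK =>
    hzBK.elim (fun hzB => (mem_ball.mp (hBρ hzB)).ne (mem_sphere.mp hz))
      (hKρ.notMem_of_mem_left hz)
  have hsphereC : sphere c ρ ⊆ C :=
    (isPreconnected_sphere hE c ρ).subset_connectedComponentIn hw hsphere
  have hclosure : closure C ∩ (B ∪ K)ᶜ ⊆ C := fun z ⟨hzC, hz⟩ =>
    (isPreconnected_connectedComponentIn.subset_closure (subset_insert z C)
      (insert_subset hzC subset_closure)).subset_connectedComponentIn
      (mem_insert_of_mem z (mem_connectedComponentIn (hsphere hw)))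
      (insert_subset hz (connectedComponentIn_subset _ _)) (mem_insert z C)
  -- `C ∪ ball c ρ` is relatively clopen in `Kᶜ`: `B` lies inside the ball and its sphere inside `C`
  have hcover : Kᶜ ⊆ C ∪ ball c ρ := by
    refine hKc.subset_of_closure_inter_subset
      ((hB.union hK.isClosed).isOpen_compl.connectedComponentIn.union isOpen_ball)
      ⟨w, hKρ.notMem_of_mem_left hw, Or.inl (mem_connectedComponentIn (hsphere hw))⟩ ?_
    rintro z ⟨hz, hzK⟩
    rw [closure_union] at hz
    by_cases hzB : z ∈ B
    · exact Or.inr (hBρ hzB)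
    rcases hz with hzC | hzball
    · exact Or.inl (hclosure ⟨hzC, not_or.mpr ⟨hzB, hzK⟩⟩)
    · have hzcb : z ∈ ball c ρ ∪ sphere c ρ := by
        rw [ball_union_sphere]
        exact closure_ball_subset_closedBall hzball
      exact hzcb.elim Or.inr fun hzs => Or.inl (hsphereC hzs)
  have : Nontrivial E := rank_pos_iff_nontrivial.mp (zero_lt_one.trans hE)
  intro hC
  exact NormedSpace.unbounded_univ ℝ E <|
    (hK.isBounded.union (hC.union isBounded_ball)).subset fun z _ =>
      (em (z ∈ K)).imp_right fun hz => hcover hz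

section PolynomialClosure

variable (L : Set ℂ) [CompactSpace L]

noncomputable abbrev polynomialClosure : Subalgebra ℂ C(L, ℂ) :=
  (polynomialFunctions L).topologicalClosure

noncomputable def polynomialClosure.coord : polynomialClosure L :=
  ⟨(X : ℂ[X]).toContinuousMapOn L, (polynomialFunctions L).le_topologicalClosure ⟨X, trivial, rfl⟩⟩

variable {L}

namespace polynomialClosure

theorem coord_apply (z : L) : (coord L : C(L, ℂ)) z = z := by
  simp [coord]

theorem notMem_spectrum_coord {w : ℂ} (hw : ¬ IsBounded (connectedComponentIn Lᶜ w)) :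
    w ∉ spectrum ℂ (coord L) := by
  have : IsClosed (polynomialClosure L : Set C(L, ℂ)) :=
    (polynomialFunctions L).isClosed_topologicalClosure
  have hrange : Set.range (coord L : C(L, ℂ)) = L := by
    ext
    simp [coord_apply]
  intro h
  have := Subalgebra.spectrum_isBounded_connectedComponentIn (polynomialClosure L) (coord L) h
  rw [ContinuousMap.spectrum_eq_range, hrange] at this
  exact hw this

theorem isUnit_coord_pow_sub {n : ℕ} (hn : 0 < n) {c : ℂ}
    (hc : ∀ w, w ^ n = c → ¬ IsBounded (connectedComponentIn Lᶜ w)) :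
    IsUnit (coord L ^ n - algebraMap ℂ _ c) := by
  have hcs : c ∉ spectrum ℂ (coord L ^ n) := by
    rw [spectrum.map_pow_of_pos _ hn]
    rintro ⟨w, hw, rfl⟩
    exact notMem_spectrum_coord (hc w rfl) hw
  simpa only [neg_sub] using (spectrum.notMem_iff.mp hcs).neg

theorem exists_mul_approx (H : polynomialClosure L) (q : ℂ[X]) {ε : ℝ} (hε : 0 < ε) :
    ∃ p : ℂ[X], ∀ z : L, ‖q.eval ↑z * p.eval ↑z - q.eval ↑z * (H : C(L, ℂ)) z‖ < ε := by
  have hH : (H : C(L, ℂ)) ∈ closure (polynomialFunctions L : Set C(L, ℂ)) := H.2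
  have hqH := map_mem_closure (continuous_const.mul continuous_id) hH
    (mapsTo_image (q.toContinuousMapOn L * ·) _)
  obtain ⟨_, ⟨_, ⟨p, -, rfl⟩, rfl⟩, hp⟩ := Metric.mem_closure_iff.mp hqH ε hε
  refine ⟨p, fun z => ?_⟩
  rw [← dist_eq_norm, dist_comm]
  exact (ContinuousMap.dist_apply_le_dist z).trans_lt hp

theorem exists_X_pow_mul_approx_div {n k : ℕ} (hkn : k ≤ n) {c : ℂ}
    (hu : IsUnit (coord L ^ n - algebraMap ℂ _ c)) (f : ℂ[X]) {ε : ℝ} (hε : 0 < ε) :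
    ∃ p : ℂ[X], ∀ z ∈ L, ‖z ^ k * p.eval z - f.eval z * z ^ n / (z ^ n - c)‖ < ε := by
  set v : polynomialClosure L := ↑hu.unit⁻¹
  have hv : ∀ z : L, (v : C(L, ℂ)) z = ((z : ℂ) ^ n - c)⁻¹ := fun z => by
    have h : (↑(coord L ^ n - algebraMap ℂ _ c) : C(L, ℂ)) z * (v : C(L, ℂ)) z = 1 := by
      rw [← ContinuousMap.mul_apply, ← Subalgebra.coe_mul, IsUnit.mul_val_inv]
      rfl
    exact eq_inv_of_mul_eq_one_right (by simpa [coord_apply] using h)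
  obtain ⟨p, hp⟩ := exists_mul_approx (aeval (coord L) (f * X ^ (n - k)) * v) (X ^ k) hε
  refine ⟨p, fun z hz => ?_⟩
  convert hp ⟨z, hz⟩ using 3
  · simp
  rw [Subalgebra.coe_mul, ContinuousMap.mul_apply, hv, ← Subalgebra.aeval_coe,
    aeval_continuousMap_apply, coord_apply]
  obtain ⟨m, rfl⟩ := Nat.exists_eq_add_of_le hkn
  simp only [eval_mul, eval_pow, eval_X, Nat.add_sub_cancel_left, pow_add]
  ring

theorem isUnit_coord_pow_sub_ofReal_pow {K : Set ℂ} (hK : IsCompact K)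
    (hKc : IsPreconnected Kᶜ) {r ρ : ℝ} (hρ : 0 ≤ ρ) (hrρ : r < ρ) (hKρ : Disjoint (sphere 0 ρ) K)
    [CompactSpace ↥(closedBall (0 : ℂ) r ∪ K)] {n : ℕ} (hn : n ≠ 0) :
    IsUnit (coord (closedBall (0 : ℂ) r ∪ K) ^ n - algebraMap ℂ _ ((ρ : ℂ) ^ n)) := by
  refine isUnit_coord_pow_sub (Nat.pos_of_ne_zero hn) fun w hw => ?_
  have hwρ : w ∈ sphere (0 : ℂ) ρ := by
    have := congrArg norm hw
    rw [norm_pow, norm_pow, Complex.norm_real, Real.norm_of_nonneg hρ] at this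
    exact mem_sphere_zero_iff_norm.mpr ((pow_left_inj₀ (norm_nonneg w) hρ hn).mp this)
  exact not_isBounded_connectedComponentIn_compl (by simp [Complex.rank_real_complex])
    isClosed_closedBall hK hKc (closedBall_subset_ball hrρ) hKρ hwρ

end polynomialClosure

end PolynomialClosure

theorem norm_div_sub_le {𝕜 : Type*} [NormedField 𝕜] {u v : 𝕜} {s t : ℝ} (hu : ‖u‖ ≤ s)
    (hv : t ≤ ‖v‖) (hst : s < t) : ‖u / (v - u)‖ ≤ s / (t - s) := by
  rw [norm_div]
  exact div_le_div₀ ((norm_nonneg u).trans hu) hu (sub_pos.mpr hst)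
    (by linarith [norm_sub_norm_le v u])

theorem tendsto_pow_div_pow_sub_pow {s t : ℝ} (hs : 0 ≤ s) (hst : s < t) :
    Tendsto (fun n : ℕ => s ^ n / (t ^ n - s ^ n)) atTop (𝓝 0) := by
  have ht : 0 < t := hs.trans_lt hst
  have hq := tendsto_pow_atTop_nhds_zero_of_lt_one (div_nonneg hs ht.le) ((div_lt_one ht).mpr hst)
  have hlim := hq.div (tendsto_const_nhds.sub hq) (by norm_num : (1 : ℝ) - 0 ≠ 0)
  rw [zero_div] at hlim
  refine hlim.congr fun n => ?_
  have htn : t ^ n ≠ 0 := by positivity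
  simp only [Pi.div_apply, div_pow]
  field_simp

theorem eventually_norm_pow_div_pow_sub_pow_lt {s ρ t ε : ℝ} (hs : 0 ≤ s) (hsρ : s < ρ)
    (hρt : ρ < t) (hε : 0 < ε) :
    ∀ᶠ n : ℕ in atTop, (∀ z : ℂ, ‖z‖ ≤ s → ‖z ^ n / (z ^ n - (ρ : ℂ) ^ n)‖ < ε) ∧
      ∀ z : ℂ, t ≤ ‖z‖ → ‖z ^ n / (z ^ n - (ρ : ℂ) ^ n) - 1‖ < ε := by
  have hρ : 0 ≤ ρ := hs.trans hsρ.le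
  filter_upwards [eventually_ne_atTop 0,
    (tendsto_pow_div_pow_sub_pow hs hsρ).eventually_lt_const hε,
    (tendsto_pow_div_pow_sub_pow hρ hρt).eventually_lt_const hε] with n hn hin hout
  have hρn : ‖(ρ : ℂ) ^ n‖ = ρ ^ n := by simp [abs_of_nonneg hρ]
  refine ⟨fun z hz => ?_, fun z hz => ?_⟩
  · rw [← norm_neg, ← div_neg, neg_sub]
    refine (norm_div_sub_le ?_ hρn.ge (pow_lt_pow_left₀ hsρ hs hn)).trans_lt hin
    rw [norm_pow]
    exact pow_le_pow_left₀ (norm_nonneg z) hz n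
  · have hzn : t ^ n ≤ ‖z ^ n‖ := by
      rw [norm_pow]
      exact pow_le_pow_left₀ (hρ.trans hρt.le) hz n
    have hρtn : ρ ^ n < t ^ n := pow_lt_pow_left₀ hρt hρ hn
    have hz0 : z ^ n - (ρ : ℂ) ^ n ≠ 0 := fun h => by
      rw [sub_eq_zero.mp h, hρn] at hzn
      linarith
    rw [div_sub_one hz0, sub_sub_cancel]
    exact (norm_div_sub_le hρn.le hzn hρtn).trans_lt hout

theorem exists_gt_forall_le_norm_of_closedBall_inter_eq_empty {E : Type*}
    [NormedAddCommGroup E] [NormedSpace ℝ E] [ProperSpace E] {K : Set E} (hK : IsClosed K) {r : ℝ}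
    (hr : 0 ≤ r) (hD : closedBall (0 : E) r ∩ K = ∅) : ∃ d > r, ∀ z ∈ K, d ≤ ‖z‖ := by
  obtain ⟨δ, hδ, hδK⟩ := (isCompact_closedBall (0 : E) r).exists_thickening_subset_open
    hK.isOpen_compl (subset_compl_iff_disjoint_right.mpr (disjoint_iff_inter_eq_empty.mpr hD))
  rw [thickening_closedBall hδ hr] at hδK
  exact ⟨δ + r, by linarith, fun z hz => not_lt.mp fun h => hδK (mem_ball_zero_iff.mpr h) hz⟩

theorem exists_X_pow_mul_approx {K : Set ℂ} (hK : IsCompact K) (hKc : IsPreconnected Kᶜ) {r : ℝ}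
    (hr : 0 ≤ r) (hD : closedBall (0 : ℂ) r ∩ K = ∅) (f : ℂ[X]) (k : ℕ) {ε : ℝ} (hε : 0 < ε) :
    ∃ p : ℂ[X], (∀ z ∈ closedBall (0 : ℂ) r, ‖z ^ k * p.eval z‖ < ε) ∧
      ∀ z ∈ K, ‖z ^ k * p.eval z - f.eval z‖ < ε := by
  obtain ⟨d, hrd, hKd⟩ := exists_gt_forall_le_norm_of_closedBall_inter_eq_empty hK.isClosed hr hD
  obtain ⟨ρ, hrρ, hρd⟩ := exists_between hrd
  set L := closedBall (0 : ℂ) r ∪ K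
  have hL : IsCompact L := (isCompact_closedBall 0 r).union hK
  have := isCompact_iff_compactSpace.mp hL
  obtain ⟨M, hM0, hM⟩ : ∃ M > 0, ∀ z ∈ L, ‖f.eval z‖ ≤ M := by
    obtain ⟨M, hM⟩ := hL.exists_bound_of_continuousOn f.continuous.continuousOn
    exact ⟨|M| + 1, by positivity, fun z hz => by linarith [hM z hz, le_abs_self M]⟩
  have hf_mul_small : ∀ z ∈ L, ∀ w : ℂ, ‖w‖ < ε / 2 / M → ‖f.eval z * w‖ < ε / 2 := fun z hz w hw =>
    calc ‖f.eval z * w‖ ≤ M * ‖w‖ := by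
          rw [norm_mul]
          gcongr
          exact hM z hz
      _ < ε / 2 := by rwa [lt_div_iff₀' hM0] at hw
  obtain ⟨n, hkn, hn, hin, hout⟩ := ((eventually_ge_atTop k).and ((eventually_ne_atTop 0).and
    (eventually_norm_pow_div_pow_sub_pow_lt hr hrρ hρd (by positivity : 0 < ε / 2 / M)))).exists
  have hu := polynomialClosure.isUnit_coord_pow_sub_ofReal_pow hK hKc (hr.trans hrρ.le) hrρ
    (Set.disjoint_left.mpr fun z hz hzK => by
      linarith [hKd z hzK, mem_sphere_zero_iff_norm.mp hz]) hn
  obtain ⟨p, hp⟩ := polynomialClosure.exists_X_pow_mul_approx_div hkn hu f (half_pos hε)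
  refine ⟨p, fun z hz => ?_, fun z hz => ?_⟩
  · calc ‖z ^ k * p.eval z‖
        ≤ ‖f.eval z * (z ^ n / (z ^ n - ρ ^ n))‖ +
          ‖z ^ k * p.eval z - f.eval z * z ^ n / (z ^ n - ρ ^ n)‖ := by
          rw [← mul_div_assoc]
          exact norm_le_insert' _ _
      _ < ε / 2 + ε / 2 :=
          add_lt_add (hf_mul_small z (Or.inl hz) _ (hin z (mem_closedBall_zero_iff.mp hz)))
            (hp z (Or.inl hz))
      _ = ε := add_halves ε
  · calc ‖z ^ k * p.eval z - f.eval z‖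
        ≤ ‖z ^ k * p.eval z - f.eval z * z ^ n / (z ^ n - ρ ^ n)‖ +
          ‖f.eval z * (z ^ n / (z ^ n - ρ ^ n) - 1)‖ := by
          rw [mul_sub_one, ← mul_div_assoc]
          exact norm_sub_le_norm_sub_add_norm_sub _ _ _
      _ < ε / 2 + ε / 2 :=
          add_lt_add (hp z (Or.inr hz)) (hf_mul_small z (Or.inr hz) _ (hout z (hKd z hz)))
      _ = ε := add_halves ε

open Polynomial in
theorem lemma_2_7_general (K : Set ℂ) (hK : IsCompact K)
    (hKc : IsConnected Kᶜ) (r : ℝ) (hr : 0 < r)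
    (hD : Metric.closedBall (0:ℂ) r ∩ K = ∅) (P Q : Polynomial ℂ) :
    ∀ ε > (0:ℝ), ∃ (Pt Pi : Polynomial ℂ) (lam : ℕ), P.natDegree < lam ∧
      Pt = P + X ^ lam * Pi ∧
      (∀ z ∈ Metric.closedBall (0:ℂ) r, ‖Pt.eval z - P.eval z‖ < ε) ∧
      (∀ z ∈ K, ‖Pt.eval z - Q.eval z‖ < ε) := by
  intro ε hε
  obtain ⟨Pi, hdisk, hfar⟩ := exists_X_pow_mul_approx hK hKc.isPreconnected hr.le hD (Q - P)
    (P.natDegree + 1) hε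
  refine ⟨P + X ^ (P.natDegree + 1) * Pi, Pi, P.natDegree + 1, Nat.lt_succ_self _, rfl,
    fun z hz => ?_, fun z hz => ?_⟩
  · simpa using hdisk z hz
  · convert hfar z hz using 2
    simp only [eval_add, eval_mul, eval_pow, eval_X, eval_sub]
    ring

open Polynomial in
theorem lemma_2_7 (K : Set ℂ) (hK : IsCompact K) (h0 : (0:ℂ) ∉ K)
    (hKc : IsConnected Kᶜ) (r : ℝ) (hr : 0 < r)
    (hD : Metric.closedBall (0:ℂ) r ∩ K = ∅) (P Q : Polynomial ℂ) :
    ∀ ε > (0:ℝ), ∃ (Pt Pi : Polynomial ℂ) (lam : ℕ), P.natDegree < lam ∧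
      Pt = P + X ^ lam * Pi ∧
      (∀ z ∈ Metric.closedBall (0:ℂ) r, ‖Pt.eval z - P.eval z‖ < ε) ∧
      (∀ z ∈ K, ‖Pt.eval z - Q.eval z‖ < ε) :=
  lemma_2_7_general K hK hKc r hr hD P Q
end

section
/- Let Ω be a domain (open connected subset) of ℂ. There exists a sequence (K_m)_{m≥1} of compact subsets of ℂ with K_m ∩ Ω = ∅ and K_m^c connected, such that every compact set K ⊂ ℂ with K ∩ Ω = ∅ and K^c connected is contained in some K_m. -/
/-!
Every compact `L` disjoint from `Ω` with connected complement lies in a ball `closedBall 0 m`,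
and its complement contains a path from a point of `Ω` to a point outside that ball. Cover the
path by finitely many sets from a countable basis of open connected sets, all inside `Lᶜ`; if
`U` is their union, then `closedBall 0 m \ (Ω ∪ U)` is compact, contains `L`, misses `Ω`, and its
complement `(closedBall 0 m)ᶜ ∪ Ω ∪ U` is connected, being a chain of three connected sets.
There are only countably many such sets.
-/

open Metric Set TopologicalSpace

theorem TopologicalSpace.IsTopologicalBasis.exists_finite_isPreconnected_cover
    {X : Type*} [TopologicalSpace X] {𝓑 : Set (Set X)} (h𝓑 : IsTopologicalBasis 𝓑)
    (h𝓑pre : ∀ B ∈ 𝓑, IsPreconnected B) {C V : Set X} (hCc : IsCompact C)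
    (hCpre : IsPreconnected C) (hV : IsOpen V) (hCV : C ⊆ V) :
    ∃ 𝓕 ⊆ 𝓑, 𝓕.Finite ∧ C ⊆ ⋃₀ 𝓕 ∧ ⋃₀ 𝓕 ⊆ V ∧ IsPreconnected (⋃₀ 𝓕) := by
  choose! B hB𝓑 hxB hBV using fun x (hx : x ∈ C) => h𝓑.exists_subset_of_mem_open (hCV hx) hV
  obtain ⟨t, htC, hCt⟩ := hCc.elim_nhds_subcover B fun x hx =>
    (h𝓑.isOpen (hB𝓑 x hx)).mem_nhds (hxB x hx)
  have hunion : ⋃₀ (B '' t) = ⋃ x ∈ t, B x := sUnion_image _ _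
  refine ⟨B '' t, image_subset_iff.2 fun x hx => hB𝓑 x (htC x hx), t.finite_toSet.image _,
    hunion ▸ hCt, hunion ▸ iUnion₂_subset fun x hx => hBV x (htC x hx), ?_⟩
  rw [hunion]
  -- two points of the union are joined through `C`, which every `B x` meets at `x`
  refine isPreconnected_of_forall_pair fun y hy z hz => ?_
  obtain ⟨a, ha, hya⟩ := mem_iUnion₂.1 hy
  obtain ⟨b, hb, hzb⟩ := mem_iUnion₂.1 hz
  refine ⟨B a ∪ C ∪ B b, union_subset (union_subset (subset_biUnion_of_mem ha) hCt)
    (subset_biUnion_of_mem hb), Or.inl (Or.inl hya), Or.inr hzb, ?_⟩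
  have haC : IsPreconnected (B a ∪ C) :=
    (h𝓑pre _ (hB𝓑 a (htC a ha))).union a (hxB a (htC a ha)) (htC a ha) hCpre
  exact haC.union b (Or.inr (htC b hb)) (hxB b (htC b hb)) (h𝓑pre _ (hB𝓑 b (htC b hb)))

section NormedSpace

variable {E : Type*} [NormedAddCommGroup E] [NormedSpace ℝ E]

theorem isConnected_compl_closedBall_zero (hE : 1 < Module.rank ℝ E) {r : ℝ} (hr : 0 ≤ r) :
    IsConnected (closedBall (0 : E) r)ᶜ := by
  have hpolar : (closedBall (0 : E) r)ᶜ = (fun p : E × ℝ => p.2 • p.1) '' (sphere 0 1 ×ˢ Ioi r) := by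
    ext z
    simp only [mem_compl_iff, mem_closedBall, dist_zero_right, not_le, mem_image, mem_prod,
      mem_sphere_zero_iff_norm, mem_Ioi, Prod.exists]
    constructor
    · intro hz
      have hz0 : ‖z‖ ≠ 0 := (hr.trans_lt hz).ne'
      exact ⟨‖z‖⁻¹ • z, ‖z‖, ⟨by rw [norm_smul, norm_inv, norm_norm, inv_mul_cancel₀ hz0], hz⟩,
        by rw [smul_smul, mul_inv_cancel₀ hz0, one_smul]⟩
    · rintro ⟨v, t, ⟨hv, ht⟩, rfl⟩
      rwa [norm_smul, hv, mul_one, Real.norm_of_nonneg (hr.trans ht.le)]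
  rw [hpolar]
  exact ((isConnected_sphere hE 0 zero_le_one).prod isConnected_Ioi).image _
    (by fun_prop : Continuous fun p : E × ℝ => p.2 • p.1).continuousOn

def admissibleCompacts (Ω : Set E) : Set (Set E) :=
  {K | IsCompact K ∧ K ∩ Ω = ∅ ∧ IsConnected Kᶜ}

theorem empty_mem_admissibleCompacts (Ω : Set E) : ∅ ∈ admissibleCompacts Ω :=
  ⟨isCompact_empty, empty_inter Ω, compl_empty (α := E) ▸ isConnected_univ⟩

variable [ProperSpace E]

theorem closedBall_diff_mem_admissibleCompacts (hE : 1 < Module.rank ℝ E) {r : ℝ} (hr : 0 ≤ r)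
    {Ω U : Set E} (hΩo : IsOpen Ω) (hΩc : IsPreconnected Ω) (hUo : IsOpen U)
    (hUc : IsPreconnected U) (hΩU : (Ω ∩ U).Nonempty) {v : E} (hvU : v ∈ U) (hv : v ∉ closedBall 0 r) :
    closedBall 0 r \ (Ω ∪ U) ∈ admissibleCompacts Ω := by
  refine ⟨(isCompact_closedBall 0 r).diff (hΩo.union hUo), ?_, ?_⟩
  · exact eq_empty_of_forall_notMem fun z hz => hz.1.2 (Or.inl hz.2)
  · rw [sdiff_eq, compl_inter, compl_compl]
    exact (isConnected_compl_closedBall_zero hE hr).union ⟨v, hv, Or.inr hvU⟩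
      ⟨⟨v, Or.inr hvU⟩, hΩc.union' hΩU hUc⟩

theorem exists_closedBall_diff_mem_admissibleCompacts_superset (hE : 1 < Module.rank ℝ E)
    {𝓑 : Set (Set E)} (h𝓑 : IsTopologicalBasis 𝓑) (h𝓑pre : ∀ B ∈ 𝓑, IsPreconnected B)
    {Ω : Set E} (hΩo : IsOpen Ω) (hΩc : IsConnected Ω) {L : Set E}
    (hL : L ∈ admissibleCompacts Ω) :
    ∃ m : ℕ, ∃ 𝓕 ⊆ 𝓑, 𝓕.Finite ∧ L ⊆ closedBall 0 m \ (Ω ∪ ⋃₀ 𝓕) ∧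
      closedBall 0 m \ (Ω ∪ ⋃₀ 𝓕) ∈ admissibleCompacts Ω := by
  obtain ⟨hLc, hLΩ, hLconn⟩ := hL
  obtain ⟨r, hLr⟩ := hLc.isBounded.subset_closedBall 0
  set m := ⌈r⌉₊
  have hLm : L ⊆ closedBall 0 m := hLr.trans (closedBall_subset_closedBall (Nat.le_ceil r))
  obtain ⟨w, hw⟩ := hΩc.nonempty
  obtain ⟨v, hv⟩ := (isConnected_compl_closedBall_zero hE (Nat.cast_nonneg (α := ℝ) m)).nonempty
  have hLΩ' : Ω ⊆ Lᶜ := fun z hz hzL => (eq_empty_iff_forall_notMem.1 hLΩ) z ⟨hzL, hz⟩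
  have hLo : IsOpen Lᶜ := hLc.isClosed.isOpen_compl
  obtain ⟨γ, hγ⟩ := ((hLo.isConnected_iff_isPathConnected).1 hLconn).joinedIn w (hLΩ' hw) v
    fun hvL => hv (hLm hvL)
  obtain ⟨𝓕, h𝓕𝓑, h𝓕fin, hγ𝓕, h𝓕L, h𝓕pre⟩ := h𝓑.exists_finite_isPreconnected_cover h𝓑pre
    (isCompact_range γ.continuous) (isConnected_range γ.continuous).isPreconnected hLo
    (range_subset_iff.2 hγ)
  have hw𝓕 : w ∈ ⋃₀ 𝓕 := hγ𝓕 ⟨0, γ.source⟩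
  have hv𝓕 : v ∈ ⋃₀ 𝓕 := hγ𝓕 ⟨1, γ.target⟩
  refine ⟨m, 𝓕, h𝓕𝓑, h𝓕fin, fun z hz => ⟨hLm hz, ?_⟩, ?_⟩
  · rintro (hzΩ | hz𝓕)
    exacts [hLΩ' hzΩ hz, h𝓕L hz𝓕 hz]
  · exact closedBall_diff_mem_admissibleCompacts hE (Nat.cast_nonneg _) hΩo hΩc.isPreconnected
      (isOpen_sUnion fun B hB => h𝓑.isOpen (h𝓕𝓑 hB)) h𝓕pre ⟨w, hw, hw𝓕⟩ hv𝓕 hv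

theorem exists_countable_cofinal_admissibleCompacts (hE : 1 < Module.rank ℝ E) {Ω : Set E}
    (hΩo : IsOpen Ω) (hΩc : IsConnected Ω) :
    ∃ 𝓚 ⊆ admissibleCompacts Ω, 𝓚.Countable ∧ ∀ L ∈ admissibleCompacts Ω, ∃ K ∈ 𝓚, L ⊆ K := by
  obtain ⟨𝓑, h𝓑sub, h𝓑c, h𝓑⟩ :=
    (IsTopologicalBasis.isOpen_isPreconnected (α := E)).exists_countable
  refine ⟨admissibleCompacts Ω ∩
    image2 (fun (m : ℕ) 𝓕 => closedBall 0 m \ (Ω ∪ ⋃₀ 𝓕)) univ {𝓕 | 𝓕.Finite ∧ 𝓕 ⊆ 𝓑},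
    inter_subset_left,
    (countable_univ.image2 (countable_ofPred_finite_subset h𝓑c) _).mono inter_subset_right,
    fun L hL => ?_⟩
  obtain ⟨m, 𝓕, h𝓕𝓑, h𝓕fin, hL, hK⟩ := exists_closedBall_diff_mem_admissibleCompacts_superset
    hE h𝓑 (fun B hB => (h𝓑sub hB).2) hΩo hΩc hL
  exact ⟨_, ⟨hK, m, mem_univ m, 𝓕, ⟨h𝓕fin, h𝓕𝓑⟩, rfl⟩, hL⟩

end NormedSpace

theorem lemma_5_2 (Ω : Set ℂ) (hΩo : IsOpen Ω) (hΩc : IsConnected Ω) :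
    ∃ K : ℕ → Set ℂ,
      (∀ m, IsCompact (K m) ∧ K m ∩ Ω = ∅ ∧ IsConnected (K m)ᶜ) ∧
      ∀ L : Set ℂ, IsCompact L → L ∩ Ω = ∅ → IsConnected Lᶜ → ∃ m, L ⊆ K m := by
  have hℂ : 1 < Module.rank ℝ ℂ := by rw [Complex.rank_real_complex]; norm_num
  obtain ⟨𝓚, h𝓚, h𝓚c, h𝓚cof⟩ := exists_countable_cofinal_admissibleCompacts hℂ hΩo hΩc
  have h𝓚ne : 𝓚.Nonempty :=
    let ⟨K, hK, _⟩ := h𝓚cof ∅ (empty_mem_admissibleCompacts Ω)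
    ⟨K, hK⟩
  obtain ⟨K, rfl⟩ := h𝓚c.exists_eq_range h𝓚ne
  refine ⟨K, fun m => h𝓚 (mem_range_self m), fun L hL hLΩ hLc => ?_⟩
  obtain ⟨_, ⟨m, rfl⟩, hLm⟩ := h𝓚cof L ⟨hL, hLΩ, hLc⟩
  exact ⟨m, hLm⟩
end

section
/- Let f be a formal power series, p ≥ 0, q ≥ 1 integers with det(H_q^{(f)}(a_{p−q+1})) ≠ 0. Then there exists a unique rational function [p/q]_f(z) = (Σ_{ν=0}^p n_ν z^ν)/(Σ_{ν=0}^q d_ν z^ν) with d_0 = 1 whose Taylor expansion Σ b_ν z^ν around 0 satisfies b_ν = a_ν for all ν = 0, 1, …, p + q. -/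
/-!
Write `A = ∑ aᵥ Xᵛ`. Since `D(0) = 1`, the Taylor series `T` of `N/D` at `0` satisfies `D·T = N`
in `ℂ⟦X⟧` (Leibniz' rule makes the Taylor map multiplicative), and `D` is a unit there. So the
Padé condition `T ≡ A mod X^(p+q+1)` is the linear congruence `D·A ≡ N mod X^(p+q+1)`.
Coefficients `p+1, …, p+q` of `D·A` vanish iff `(d_q, …, d_1)` solves the Hankel system
`H x = -(a_{p+1}, …, a_{p+q})`, which is uniquely solvable as `det H ≠ 0`; then `N` is the
truncation of `D·A` below degree `p+1`. For two solutions,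
`N'D - ND' = D'(DA - N) - D(D'A - N')` is divisible by `X^(p+q+1)` and has degree `≤ p+q`,
hence vanishes.
-/

/-- The q×q Hankel matrix of the coefficient sequence `a` at `a_{p-q+1}`:
entry (i,j) (0-based) is `a_{p-q+i+j+1}`, with the convention `a_ν = 0` for `ν < 0`. -/
def padeHankel (a : ℕ → ℂ) (p q : ℕ) : Matrix (Fin q) (Fin q) ℂ :=
  Matrix.of fun i j =>
    if h : 0 ≤ (p : ℤ) - q + i + j + 1 then a ((p : ℤ) - q + i + j + 1).toNat else 0

/-- `N/D` is a Padé approximant of type `(p,q)` to the formal power series with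
coefficients `a`: deg N ≤ p, deg D ≤ q, D(0) = 1, and the Taylor expansion of `N/D`
at 0 agrees with `a` up to order `p+q`. -/
def IsPadeApprox (a : ℕ → ℂ) (p q : ℕ) (N D : Polynomial ℂ) : Prop :=
  N.natDegree ≤ p ∧ D.natDegree ≤ q ∧ D.coeff 0 = 1 ∧
  ∃ ps : FormalMultilinearSeries ℂ ℂ ℂ,
    HasFPowerSeriesAt (fun z => N.eval z / D.eval z) ps 0 ∧
    ∀ ν ≤ p + q, ps.coeff ν = a ν


open Filter Topology Polynomial
open scoped PowerSeries Matrix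

section Taylor

variable {𝕜 : Type*} [NontriviallyNormedField 𝕜]

noncomputable def taylorSeriesAtZero (f : 𝕜 → 𝕜) : 𝕜⟦X⟧ :=
  PowerSeries.mk fun n => iteratedDeriv n f 0 / n.factorial

theorem Filter.EventuallyEq.taylorSeriesAtZero_eq {f g : 𝕜 → 𝕜} (h : f =ᶠ[𝓝 0] g) :
    taylorSeriesAtZero f = taylorSeriesAtZero g := by
  ext n
  simp only [taylorSeriesAtZero, PowerSeries.coeff_mk, h.iteratedDeriv_eq]

theorem taylorSeriesAtZero_eval [CharZero 𝕜] (P : 𝕜[X]) :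
    taylorSeriesAtZero (fun z => P.eval z) = P := by
  ext n
  have hn : P.natDegree < max P.natDegree n + 1 := Nat.lt_succ_of_le (le_max_left _ _)
  simp only [taylorSeriesAtZero, PowerSeries.coeff_mk, coeff_coe, eval_eq_sum_range' hn]
  rw [iteratedDeriv_fun_sum fun i _ => by fun_prop]
  simp only [iteratedDeriv_const_mul_field, iteratedDeriv_fun_pow_zero, Nat.cast_ite,
    Nat.cast_zero, mul_ite, mul_zero, Finset.sum_ite_eq, Finset.mem_range,
    Nat.lt_succ_of_le (le_max_right _ n), if_true]
  field_simp [Nat.factorial_ne_zero]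

variable [CompleteSpace 𝕜] [CharZero 𝕜]

theorem HasFPowerSeriesAt.taylorSeriesAtZero_eq {f : 𝕜 → 𝕜}
    {ps : FormalMultilinearSeries 𝕜 𝕜 𝕜} (hf : HasFPowerSeriesAt f ps 0) :
    taylorSeriesAtZero f = PowerSeries.mk ps.coeff := by
  ext n
  rw [taylorSeriesAtZero, PowerSeries.coeff_mk, PowerSeries.coeff_mk,
    ← hf.analyticAt.hasFPowerSeriesAt.eq_formalMultilinearSeries hf,
    FormalMultilinearSeries.coeff_ofScalars]

theorem AnalyticAt.exists_hasFPowerSeriesAt_and_iff {f : 𝕜 → 𝕜} (hf : AnalyticAt 𝕜 f 0)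
    (P : 𝕜⟦X⟧ → Prop) :
    (∃ ps : FormalMultilinearSeries 𝕜 𝕜 𝕜,
      HasFPowerSeriesAt f ps 0 ∧ P (PowerSeries.mk ps.coeff)) ↔ P (taylorSeriesAtZero f) := by
  refine ⟨fun ⟨ps, hps, hP⟩ => hps.taylorSeriesAtZero_eq ▸ hP, fun hP => ?_⟩
  have hps := hf.hasFPowerSeriesAt
  exact ⟨_, hps, hps.taylorSeriesAtZero_eq ▸ hP⟩

theorem taylorSeriesAtZero_mul {f g : 𝕜 → 𝕜} (hf : AnalyticAt 𝕜 f 0) (hg : AnalyticAt 𝕜 g 0) :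
    taylorSeriesAtZero (f * g) = taylorSeriesAtZero f * taylorSeriesAtZero g := by
  ext n
  simp only [taylorSeriesAtZero, PowerSeries.coeff_mk,
    iteratedDeriv_mul hf.contDiffAt hg.contDiffAt, Finset.sum_div, PowerSeries.coeff_mul,
    Finset.Nat.sum_antidiagonal_eq_sum_range_succ_mk]
  refine Finset.sum_congr rfl fun i hi => ?_
  rw [Nat.cast_choose _ (by grind)]
  field_simp [Nat.factorial_ne_zero]

theorem coe_mul_taylorSeriesAtZero_div {N D : 𝕜[X]} (hD : D.eval 0 ≠ 0) :
    (D : 𝕜⟦X⟧) * taylorSeriesAtZero (fun z => N.eval z / D.eval z) = N := by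
  have hDan : AnalyticAt 𝕜 (fun z => D.eval z) 0 := AnalyticOnNhd.eval_polynomial D 0 trivial
  have hNan : AnalyticAt 𝕜 (fun z => N.eval z) 0 := AnalyticOnNhd.eval_polynomial N 0 trivial
  have hcancel : (fun z => D.eval z) * (fun z => N.eval z / D.eval z) =ᶠ[𝓝 0]
      fun z => N.eval z := by
    filter_upwards [D.continuous.continuousAt.eventually_ne hD] with z hz
    exact mul_div_cancel₀ _ hz
  rw [← taylorSeriesAtZero_eval D, ← taylorSeriesAtZero_eval N,
    ← taylorSeriesAtZero_mul hDan (hNan.fun_div hDan hD), hcancel.taylorSeriesAtZero_eq]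

end Taylor

namespace PowerSeries

variable {R : Type*} [CommRing R]

theorem X_pow_succ_dvd_sub_iff {m : ℕ} {φ ψ : R⟦X⟧} :
    X ^ (m + 1) ∣ φ - ψ ↔ ∀ ν ≤ m, coeff ν φ = coeff ν ψ := by
  simp only [X_pow_dvd_iff, map_sub, sub_eq_zero, Nat.lt_succ_iff]

theorem X_pow_add_dvd_sub_trunc {m n : ℕ} {φ : R⟦X⟧} (h : ∀ i < n, coeff (m + i) φ = 0) :
    X ^ (m + n) ∣ φ - (trunc m φ : R⟦X⟧) := by
  refine X_pow_dvd_iff.2 fun d hd => ?_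
  rw [map_sub, Polynomial.coeff_coe, coeff_trunc]
  split_ifs with hdm
  · exact sub_self _
  · obtain ⟨i, rfl⟩ := Nat.exists_eq_add_of_le (not_lt.1 hdm)
    simpa using h i (by omega)

end PowerSeries

namespace Polynomial

variable {R : Type*} [CommRing R]

theorem eq_zero_of_X_pow_dvd_coe {n : ℕ} {P : R[X]} (h : PowerSeries.X ^ n ∣ (P : R⟦X⟧))
    (hP : P.natDegree < n) : P = 0 := by
  ext d
  rw [coeff_zero]
  by_cases hd : d < n
  · simpa using PowerSeries.X_pow_dvd_iff.1 h d hd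
  · exact coeff_eq_zero_of_natDegree_lt (by omega)

theorem mul_eq_mul_of_X_pow_dvd {A : R⟦X⟧} {p q : ℕ} {N D N' D' : R[X]}
    (hN : N.natDegree ≤ p) (hD : D.natDegree ≤ q) (hN' : N'.natDegree ≤ p)
    (hD' : D'.natDegree ≤ q) (h : PowerSeries.X ^ (p + q + 1) ∣ (D : R⟦X⟧) * A - (N : R⟦X⟧))
    (h' : PowerSeries.X ^ (p + q + 1) ∣ (D' : R⟦X⟧) * A - (N' : R⟦X⟧)) : N' * D = N * D' := by
  have hdvd : PowerSeries.X ^ (p + q + 1) ∣ ((N' * D - N * D' : R[X]) : R⟦X⟧) := by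
    have := dvd_sub (dvd_mul_of_dvd_right h (D' : R⟦X⟧)) (dvd_mul_of_dvd_right h' (D : R⟦X⟧))
    convert this using 1
    push_cast
    ring
  refine sub_eq_zero.1 (eq_zero_of_X_pow_dvd_coe hdvd ?_)
  refine (natDegree_sub_le _ _).trans_lt (max_lt ?_ ?_)
  · exact natDegree_mul_le.trans_lt (by omega)
  · exact natDegree_mul_le.trans_lt (by omega)

end Polynomial

theorem isPadeApprox_iff {a : ℕ → ℂ} {p q : ℕ} {N D : ℂ[X]} :
    IsPadeApprox a p q N D ↔ N.natDegree ≤ p ∧ D.natDegree ≤ q ∧ D.coeff 0 = 1 ∧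
      PowerSeries.X ^ (p + q + 1) ∣ (D : ℂ⟦X⟧) * PowerSeries.mk a - (N : ℂ⟦X⟧) := by
  refine and_congr_right' (and_congr_right' (and_congr_right fun hD0 => ?_))
  have hD : D.eval 0 ≠ 0 := by simp [← coeff_zero_eq_eval_zero, hD0]
  have hunit : IsUnit (D : ℂ⟦X⟧) := by
    simp [PowerSeries.isUnit_iff_constantCoeff, hD0]
  have hF : AnalyticAt ℂ (fun z => N.eval z / D.eval z) 0 :=
    (AnalyticOnNhd.eval_polynomial N 0 trivial).fun_div
      (AnalyticOnNhd.eval_polynomial D 0 trivial) hD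
  have hcoeff (ps : FormalMultilinearSeries ℂ ℂ ℂ) : (∀ ν ≤ p + q, ps.coeff ν = a ν) ↔
      PowerSeries.X ^ (p + q + 1) ∣ PowerSeries.mk ps.coeff - PowerSeries.mk a := by
    simp only [PowerSeries.X_pow_succ_dvd_sub_iff, PowerSeries.coeff_mk]
  simp_rw [hcoeff, hF.exists_hasFPowerSeriesAt_and_iff
    fun T => PowerSeries.X ^ (p + q + 1) ∣ T - PowerSeries.mk a]
  rw [← hunit.dvd_mul_left, mul_sub, coe_mul_taylorSeriesAtZero_div hD, dvd_sub_comm]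

theorem padeHankel_apply (a : ℕ → ℂ) (p q : ℕ) (i k : Fin q) :
    padeHankel a p q i k =
      PowerSeries.coeff (p + 1 + i) (PowerSeries.X ^ (q - k : ℕ) * PowerSeries.mk a) := by
  rw [PowerSeries.coeff_X_pow_mul', padeHankel, Matrix.of_apply]
  split_ifs <;> first | rfl | omega | (rw [PowerSeries.coeff_mk]; congr 1; omega)

theorem exists_padeDenominator {a : ℕ → ℂ} {p q : ℕ} (hdet : (padeHankel a p q).det ≠ 0) :
    ∃ D : ℂ[X], D.natDegree ≤ q ∧ D.coeff 0 = 1 ∧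
      ∀ i < q, PowerSeries.coeff (p + 1 + i) ((D : ℂ⟦X⟧) * PowerSeries.mk a) = 0 := by
  set x := (padeHankel a p q)⁻¹ *ᵥ fun i : Fin q => -a (p + 1 + i)
  have hx : padeHankel a p q *ᵥ x = fun i : Fin q => -a (p + 1 + i) := by
    rw [Matrix.mulVec_mulVec, Matrix.mul_nonsing_inv _ (isUnit_iff_ne_zero.2 hdet),
      Matrix.one_mulVec]
  -- the unknowns `x k` of the Hankel system are the coefficients `d_{q-k}` of the denominator
  refine ⟨1 + ∑ k : Fin q, C (x k) * X ^ (q - k : ℕ), ?_, ?_, fun i hi => ?_⟩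
  · refine natDegree_add_le_of_degree_le (natDegree_one.trans_le q.zero_le) ?_
    exact natDegree_sum_le_of_forall_le _ _ fun k _ =>
      natDegree_C_mul_X_pow_le _ _ |>.trans (Nat.sub_le _ _)
  · rw [coeff_add, coeff_one_zero, finsetSum_coeff, add_eq_left]
    exact Finset.sum_eq_zero fun k _ => by simp only [coeff_C_mul_X_pow]; rw [if_neg (by omega)]
  · have hrow := congrFun hx ⟨i, hi⟩
    simp only [Matrix.mulVec, dotProduct, padeHankel_apply] at hrow
    rw [← coeToPowerSeries.ringHom_apply]
    simp only [map_add, map_one, map_sum, map_mul, map_pow, coeToPowerSeries.ringHom_apply,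
      coe_C, coe_X, add_mul, one_mul, Finset.sum_mul, mul_assoc, PowerSeries.coeff_C_mul,
      PowerSeries.coeff_mk]
    rw [← neg_eq_iff_add_eq_zero, ← hrow]
    exact Finset.sum_congr rfl fun k _ => mul_comm _ _

theorem pade_exists_unique_general (a : ℕ → ℂ) (p q : ℕ)
    (hdet : (padeHankel a p q).det ≠ 0) :
    ∃ N D : Polynomial ℂ, IsPadeApprox a p q N D ∧
      ∀ N' D' : Polynomial ℂ, IsPadeApprox a p q N' D' → N' * D = N * D' := by
  obtain ⟨D, hD, hD0, hgap⟩ := exists_padeDenominator hdet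
  set N := PowerSeries.trunc (p + 1) ((D : ℂ⟦X⟧) * PowerSeries.mk a)
  have hN : N.natDegree ≤ p := Nat.lt_succ_iff.1 (PowerSeries.natDegree_trunc_lt _ p)
  have hdvd : PowerSeries.X ^ (p + q + 1) ∣ (D : ℂ⟦X⟧) * PowerSeries.mk a - (N : ℂ⟦X⟧) := by
    rw [add_right_comm]
    exact PowerSeries.X_pow_add_dvd_sub_trunc hgap
  refine ⟨N, D, isPadeApprox_iff.2 ⟨hN, hD, hD0, hdvd⟩, fun N' D' h' => ?_⟩
  obtain ⟨hN', hD', -, hdvd'⟩ := isPadeApprox_iff.1 h'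
  exact mul_eq_mul_of_X_pow_dvd hN hD hN' hD' hdvd hdvd'

theorem pade_exists_unique (a : ℕ → ℂ) (p q : ℕ) (hq : 1 ≤ q)
    (hdet : (padeHankel a p q).det ≠ 0) :
    ∃ N D : Polynomial ℂ, IsPadeApprox a p q N D ∧
      ∀ N' D' : Polynomial ℂ, IsPadeApprox a p q N' D' → N' * D = N * D' :=
  pade_exists_unique_general a p q hdet
end

section
/- Let Ω ⊂ ℂ be a simply connected domain containing 0. There exists a sequence (K̃_m)_{m≥1} of compact subsets of ℂ \ Ω, each with complement having finitely many connected components and with 0 in the unbounded component of the complement, such that: for every compact K ⊂ ℂ \ Ω whose complement has finitely many components with 0 in the unbounded component, there exists m with (i) K ⊂ K̃_m, and (ii) every component of K^c contains a component of K̃_m^c. -/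
/-- The set of connected components of a subset `S` of ℂ. -/
def setComponents (S : Set ℂ) : Set (Set ℂ) :=
  {C | ∃ x ∈ S, C = connectedComponentIn S x}

/-!
The sequence enumerates the admissible sets among the countably many candidates
`(Ωᶜ ∩ closedBall 0 n) \ ⋃₀ 𝒱`, `𝒱` a finite family of balls with rational radii and centres in
a countable dense set. Given an admissible `K ⊆ closedBall 0 n`, join `0` by a path in its
component of `Kᶜ` to a point beyond radius `n`, cover the path by finitely many such balls inside
that component, and add one ball inside each of the finitely many components of `Kᶜ`. The
resulting candidate contains `K`; its complement is the union of `Ω`, the exterior of the ball and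
finitely many balls, hence has finitely many components; the path ties `0` to the unbounded
exterior; and every component of `Kᶜ` contains one of the added balls.
-/

open Metric Set TopologicalSpace Bornology

section RationalBalls

variable (X : Type*) [PseudoMetricSpace X] [SeparableSpace X] [Nonempty X]

def rationalBalls : Set (Set X) :=
  range fun p : ℕ × ℚ => ball (denseSeq X p.1) p.2

theorem countable_rationalBalls : (rationalBalls X).Countable :=
  countable_range _

theorem isTopologicalBasis_rationalBalls : IsTopologicalBasis (rationalBalls X) := by
  refine isTopologicalBasis_of_isOpen_of_nhds (by rintro _ ⟨p, rfl⟩; exact isOpen_ball) ?_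
  intro x U hx hU
  obtain ⟨ε, hε, hεU⟩ := Metric.isOpen_iff.1 hU x hx
  obtain ⟨n, hn⟩ := (denseRange_denseSeq X).exists_dist_lt x (half_pos hε)
  obtain ⟨r, hnr, hr⟩ := exists_rat_btwn hn
  refine ⟨_, ⟨(n, r), rfl⟩, hnr, fun y hy => hεU ?_⟩
  calc dist y x ≤ dist y (denseSeq X n) + dist x (denseSeq X n) := dist_triangle_right _ _ _
    _ < ε := by linarith [mem_ball.1 hy]

end RationalBalls

theorem isPreconnected_of_mem_rationalBalls {E : Type*} [NormedAddCommGroup E] [NormedSpace ℝ E]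
    [SeparableSpace E] {V : Set E} (hV : V ∈ rationalBalls E) : IsPreconnected V := by
  obtain ⟨p, rfl⟩ := hV
  exact isPreconnected_ball

theorem TopologicalSpace.IsTopologicalBasis.exists_finite_cover_of_isCompact {X : Type*}
    [TopologicalSpace X] {B : Set (Set X)} (hB : IsTopologicalBasis B) {S U : Set X}
    (hS : IsCompact S) (hU : IsOpen U) (hSU : S ⊆ U) :
    ∃ 𝒱 ⊆ B, 𝒱.Finite ∧ (∀ V ∈ 𝒱, V ⊆ U) ∧ S ⊆ ⋃₀ 𝒱 := by
  obtain ⟨𝒱, h𝒱, h𝒱fin, hS𝒱⟩ := hS.elim_finite_subcover_image (b := {V ∈ B | V ⊆ U}) (c := id)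
    (fun V hV => hB.isOpen hV.1) fun x hx => by
      obtain ⟨V, hVB, hxV, hVU⟩ := hB.exists_subset_of_mem_open (hSU hx) hU
      exact mem_biUnion ⟨hVB, hVU⟩ hxV
  exact ⟨𝒱, fun V hV => (h𝒱 hV).1, h𝒱fin, fun V hV => (h𝒱 hV).2, by rwa [sUnion_eq_biUnion]⟩

theorem IsOpen.exists_isCompact_isPreconnected {X : Type*} [TopologicalSpace X]
    [LocallyPathConnectedSpace X] {U : Set X} (hU : IsOpen U) (hUc : IsPreconnected U) {x y : X}
    (hx : x ∈ U) (hy : y ∈ U) : ∃ S ⊆ U, IsCompact S ∧ IsPreconnected S ∧ x ∈ S ∧ y ∈ S := by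
  obtain ⟨γ, hγ⟩ := (hU.isConnected_iff_isPathConnected.1 ⟨⟨x, hx⟩, hUc⟩).joinedIn x hx y hy
  exact ⟨range γ, range_subset_iff.2 hγ, isCompact_range γ.continuous,
    isPreconnected_range γ.continuous, ⟨0, γ.source⟩, ⟨1, γ.target⟩⟩

theorem exists_connectedComponentIn_compl_subset {X : Type*} [TopologicalSpace X]
    {K L V : Set X} {x : X} (hKL : K ⊆ L) (hV : V ⊆ connectedComponentIn Kᶜ x) (hVL : V ⊆ Lᶜ)
    (hVne : V.Nonempty) : ∃ y ∈ Lᶜ, connectedComponentIn Lᶜ y ⊆ connectedComponentIn Kᶜ x := by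
  obtain ⟨y, hy⟩ := hVne
  refine ⟨y, hVL hy, ?_⟩
  rw [connectedComponentIn_eq (hV hy)]
  exact connectedComponentIn_mono _ (compl_subset_compl.2 hKL)

theorem Bornology.IsBounded.not_isBounded_compl {E : Type*} [NormedAddCommGroup E]
    [NormedSpace ℝ E] [Nontrivial E] {s : Set E} (hs : IsBounded s) : ¬IsBounded sᶜ := fun h =>
  NormedSpace.unbounded_univ ℝ E (by simpa using hs.union h)

theorem Complex.isPreconnected_compl_closedBall_zero {r : ℝ} (hr : 0 < r) :
    IsPreconnected (closedBall (0 : ℂ) r)ᶜ := by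
  have hexp : (closedBall (0 : ℂ) r)ᶜ = exp '' {w | Real.log r < w.re} := by
    ext z
    simp only [mem_compl_iff, mem_closedBall, dist_zero_right, not_le, mem_image, mem_ofPred_eq]
    constructor
    · intro hz
      exact ⟨log z, by rw [log_re]; exact Real.log_lt_log hr hz,
        exp_log (norm_pos_iff.1 (hr.trans hz))⟩
    · rintro ⟨w, hw, rfl⟩
      rwa [norm_exp, ← Real.log_lt_iff_lt_exp hr]
  rw [hexp]
  exact (convex_halfSpace_re_gt _).isPreconnected.image _ continuous_exp.continuousOn

theorem finite_setComponents_sUnion {P : Set (Set ℂ)} (hP : P.Finite)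
    (hPc : ∀ p ∈ P, IsPreconnected p) : (setComponents (⋃₀ P)).Finite := by
  have hfin : (⋃ p ∈ P, connectedComponentIn (⋃₀ P) '' p).Finite := by
    refine hP.biUnion fun p hp => Subsingleton.finite ?_
    rintro _ ⟨x, hx, rfl⟩ _ ⟨y, hy, rfl⟩
    exact connectedComponentIn_eq <|
      (hPc p hp).subset_connectedComponentIn hx (subset_sUnion_of_mem hp) hy
  refine hfin.subset ?_
  rintro _ ⟨x, ⟨p, hp, hx⟩, rfl⟩
  exact mem_biUnion hp (mem_image_of_mem _ hx)

theorem subset_of_mem_setComponents {S C : Set ℂ} (hC : C ∈ setComponents S) : C ⊆ S := by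
  obtain ⟨x, -, rfl⟩ := hC
  exact connectedComponentIn_subset _ _

def IsAdmissible (Ω K : Set ℂ) : Prop :=
  IsCompact K ∧ K ⊆ Ωᶜ ∧ (setComponents Kᶜ).Finite ∧ (0 : ℂ) ∈ Kᶜ ∧
    ¬IsBounded (connectedComponentIn Kᶜ 0)

theorem isAdmissible_empty (Ω : Set ℂ) : IsAdmissible Ω ∅ := by
  refine ⟨isCompact_empty, empty_subset _, ?_, notMem_empty 0, ?_⟩
  · simpa using
      finite_setComponents_sUnion (finite_singleton univ) (by simpa using isPreconnected_univ)
  · rw [compl_empty, connectedComponentIn_univ, PreconnectedSpace.connectedComponent_eq_univ]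
    exact NormedSpace.unbounded_univ ℝ ℂ

def cutout (Ω : Set ℂ) (r : ℝ) (𝒱 : Set (Set ℂ)) : Set ℂ :=
  (Ωᶜ ∩ closedBall 0 r) \ ⋃₀ 𝒱

section Cutout

variable {Ω : Set ℂ} {r : ℝ} {𝒱 : Set (Set ℂ)}

theorem compl_cutout : (cutout Ω r 𝒱)ᶜ = ⋃₀ insert Ω (insert (closedBall 0 r)ᶜ 𝒱) := by
  rw [cutout, sdiff_eq, compl_inter, compl_inter, compl_compl, compl_compl, sUnion_insert,
    sUnion_insert, union_assoc]

theorem subset_cutout {K : Set ℂ} (hKΩ : K ⊆ Ωᶜ) (hKr : K ⊆ closedBall 0 r)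
    (h𝒱 : ∀ V ∈ 𝒱, V ⊆ Kᶜ) : K ⊆ cutout Ω r 𝒱 :=
  fun _ hx => ⟨⟨hKΩ hx, hKr hx⟩, fun ⟨V, hV, hxV⟩ => h𝒱 V hV hxV hx⟩

theorem sUnion_subset_compl_cutout : ⋃₀ 𝒱 ⊆ (cutout Ω r 𝒱)ᶜ :=
  fun _ hx hx' => hx'.2 hx

theorem isAdmissible_cutout (hΩo : IsOpen Ω) (hΩc : IsPreconnected Ω) (hr : 0 < r)
    (h𝒱 : 𝒱.Finite) (h𝒱o : ∀ V ∈ 𝒱, IsOpen V) (h𝒱c : ∀ V ∈ 𝒱, IsPreconnected V)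
    {S : Set ℂ} (hS : IsPreconnected S) (hS𝒱 : S ⊆ ⋃₀ 𝒱) (h0S : 0 ∈ S) {p : ℂ} (hpS : p ∈ S)
    (hp : r < ‖p‖) : IsAdmissible Ω (cutout Ω r 𝒱) := by
  have hSL : S ⊆ (cutout Ω r 𝒱)ᶜ := hS𝒱.trans sUnion_subset_compl_cutout
  have hext : (closedBall (0 : ℂ) r)ᶜ ⊆ (cutout Ω r 𝒱)ᶜ := by
    rw [compl_cutout]
    exact subset_sUnion_of_mem (mem_insert_of_mem _ (mem_insert _ _))
  refine ⟨?_, fun _ hx => hx.1.1, ?_, hSL h0S, fun hbdd => ?_⟩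
  · exact ((isCompact_closedBall _ _).inter_left hΩo.isClosed_compl).diff
      (isOpen_sUnion h𝒱o)
  · rw [compl_cutout]
    refine finite_setComponents_sUnion ((h𝒱.insert _).insert _) ?_
    rintro V (rfl | rfl | hV)
    exacts [hΩc, Complex.isPreconnected_compl_closedBall_zero hr, h𝒱c V hV]
  · have hfar : IsPreconnected (S ∪ (closedBall 0 r)ᶜ) :=
      hS.union p hpS (by simpa using hp) (Complex.isPreconnected_compl_closedBall_zero hr)
    exact isBounded_closedBall.not_isBounded_compl <| hbdd.subset <| subset_union_right.trans <|
      hfar.subset_connectedComponentIn (Or.inl h0S) (union_subset hSL hext)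

end Cutout

def admissibleCutouts (Ω : Set ℂ) : Set (Set ℂ) :=
  {L | IsAdmissible Ω L ∧ ∃ n : ℕ, ∃ 𝒱 ⊆ rationalBalls ℂ, 𝒱.Finite ∧ L = cutout Ω n 𝒱}

theorem countable_admissibleCutouts (Ω : Set ℂ) : (admissibleCutouts Ω).Countable := by
  refine (countable_iUnion fun n : ℕ =>
    (countable_ofPred_finite_subset (countable_rationalBalls ℂ)).image (cutout Ω n)).mono ?_
  rintro _ ⟨-, n, 𝒱, h𝒱B, h𝒱, rfl⟩
  exact mem_iUnion.2 ⟨n, 𝒱, ⟨h𝒱, h𝒱B⟩, rfl⟩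

theorem IsAdmissible.exists_mem_admissibleCutouts {Ω K : Set ℂ} (hΩo : IsOpen Ω)
    (hΩc : IsPreconnected Ω) (hK : IsAdmissible Ω K) :
    ∃ L ∈ admissibleCutouts Ω, K ⊆ L ∧
      ∀ x ∈ Kᶜ, ∃ y ∈ Lᶜ, connectedComponentIn Lᶜ y ⊆ connectedComponentIn Kᶜ x := by
  obtain ⟨hKc, hKΩ, hKfin, h0K, hKunb⟩ := hK
  have hB := isTopologicalBasis_rationalBalls ℂ
  have hKo : IsOpen Kᶜ := hKc.isClosed.isOpen_compl
  obtain ⟨ρ, hρ, hKρ⟩ := hKc.isBounded.subset_closedBall_lt 0 0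
  obtain ⟨n, hn⟩ := exists_nat_gt ρ
  obtain ⟨p, hpU, hpn⟩ : ∃ p ∈ connectedComponentIn Kᶜ 0, (n : ℝ) < ‖p‖ := by
    by_contra! h
    exact hKunb (isBounded_iff_forall_norm_le.2 ⟨n, h⟩)
  obtain ⟨S, hSU, hSc, hS, h0S, hpS⟩ := hKo.connectedComponentIn.exists_isCompact_isPreconnected
    isPreconnected_connectedComponentIn (mem_connectedComponentIn h0K) hpU
  obtain ⟨𝒱, h𝒱B, h𝒱fin, h𝒱U, hS𝒱⟩ :=
    hB.exists_finite_cover_of_isCompact hSc hKo.connectedComponentIn hSU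
  have hhole : ∀ C ∈ setComponents Kᶜ, ∃ V ∈ rationalBalls ℂ, V.Nonempty ∧ V ⊆ C := by
    rintro _ ⟨x, hx, rfl⟩
    exact hB.exists_nonempty_subset ⟨x, mem_connectedComponentIn hx⟩ hKo.connectedComponentIn
  choose! hole hholeB hholene hholeC using hhole
  set 𝒲 := 𝒱 ∪ hole '' setComponents Kᶜ
  have h𝒲K : ∀ V ∈ 𝒲, V ⊆ Kᶜ := by
    rintro V (hV | ⟨C, hC, rfl⟩)
    exacts [(h𝒱U V hV).trans (connectedComponentIn_subset _ _),
      (hholeC C hC).trans (subset_of_mem_setComponents hC)]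
  have h𝒲B : 𝒲 ⊆ rationalBalls ℂ := union_subset h𝒱B (image_subset_iff.2 hholeB)
  have h𝒲fin : 𝒲.Finite := h𝒱fin.union (hKfin.image _)
  have hKL : K ⊆ cutout Ω n 𝒲 :=
    subset_cutout hKΩ (hKρ.trans (closedBall_subset_closedBall hn.le)) h𝒲K
  refine ⟨_, ⟨?_, n, 𝒲, h𝒲B, h𝒲fin, rfl⟩, hKL, fun x hx => ?_⟩
  · exact isAdmissible_cutout hΩo hΩc (hρ.trans hn) h𝒲fin (fun V hV => hB.isOpen (h𝒲B hV))
      (fun V hV => isPreconnected_of_mem_rationalBalls (h𝒲B hV)) hS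
      (hS𝒱.trans (sUnion_mono subset_union_left)) h0S hpS hpn
  · have hC : connectedComponentIn Kᶜ x ∈ setComponents Kᶜ := ⟨x, hx, rfl⟩
    exact exists_connectedComponentIn_compl_subset hKL (hholeC _ hC)
      ((subset_sUnion_of_mem (mem_union_right _ (mem_image_of_mem _ hC))).trans
        sUnion_subset_compl_cutout) (hholene _ hC)

theorem lemma_5_9_general (Ω : Set ℂ) (hΩo : IsOpen Ω) (hΩconn : IsConnected Ω) :
    ∃ Kt : ℕ → Set ℂ,
      (∀ m, IsCompact (Kt m) ∧ Kt m ⊆ Ωᶜ ∧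
        (setComponents (Kt m)ᶜ).Finite ∧
        (0:ℂ) ∈ (Kt m)ᶜ ∧ ¬ Bornology.IsBounded (connectedComponentIn (Kt m)ᶜ 0)) ∧
      ∀ K : Set ℂ, IsCompact K → K ⊆ Ωᶜ →
        (setComponents Kᶜ).Finite →
        (0:ℂ) ∈ Kᶜ → ¬ Bornology.IsBounded (connectedComponentIn Kᶜ 0) →
        ∃ m, K ⊆ Kt m ∧
          ∀ x ∈ Kᶜ, ∃ y ∈ (Kt m)ᶜ,
            connectedComponentIn (Kt m)ᶜ y ⊆ connectedComponentIn Kᶜ x := by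
  have refine_cutout {K : Set ℂ} (hK : IsAdmissible Ω K) :=
    hK.exists_mem_admissibleCutouts hΩo hΩconn.isPreconnected
  obtain ⟨L₀, hL₀, -⟩ := refine_cutout (isAdmissible_empty Ω)
  obtain ⟨Kt, hKt⟩ := (countable_admissibleCutouts Ω).exists_eq_range ⟨L₀, hL₀⟩
  have hKt_mem (m : ℕ) : Kt m ∈ admissibleCutouts Ω := hKt ▸ mem_range_self m
  refine ⟨Kt, fun m => (hKt_mem m).1, fun K hK hKΩ hKfin h0K hKunb => ?_⟩
  obtain ⟨L, hL, hKL, hholes⟩ := refine_cutout ⟨hK, hKΩ, hKfin, h0K, hKunb⟩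
  obtain ⟨m, rfl⟩ := hKt ▸ hL
  exact ⟨m, hKL, hholes⟩

theorem lemma_5_9 (Ω : Set ℂ) (hΩo : IsOpen Ω) (hΩconn : IsConnected Ω)
    (hsc : SimplyConnectedSpace Ω) (h0 : (0:ℂ) ∈ Ω) :
    ∃ Kt : ℕ → Set ℂ,
      (∀ m, IsCompact (Kt m) ∧ Kt m ⊆ Ωᶜ ∧
        (setComponents (Kt m)ᶜ).Finite ∧
        (0:ℂ) ∈ (Kt m)ᶜ ∧ ¬ Bornology.IsBounded (connectedComponentIn (Kt m)ᶜ 0)) ∧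
      ∀ K : Set ℂ, IsCompact K → K ⊆ Ωᶜ →
        (setComponents Kᶜ).Finite →
        (0:ℂ) ∈ Kᶜ → ¬ Bornology.IsBounded (connectedComponentIn Kᶜ 0) →
        ∃ m, K ⊆ Kt m ∧
          ∀ x ∈ Kᶜ, ∃ y ∈ (Kt m)ᶜ,
            connectedComponentIn (Kt m)ᶜ y ⊆ connectedComponentIn Kᶜ x :=
  lemma_5_9_general Ω hΩo hΩconn
end

section
/- Let B be a polynomial with B(0) ≠ 0, A a polynomial, K ∪ L ⊂ ℂ compact with B(z) ≠ 0 on K ∪ L, and p > deg A, q > deg B positive integers. Then for all sufficiently small nonzero c, d ∈ ℂ, setting Ã(z) = A(z) + d z^p and B̃(z) = B(z) + (cz)^q, one has: B̃ ≠ 0 on K ∪ L ∪ {0}, sup_{z∈K∪L} |Ã(z)/B̃(z) − A(z)/B(z)| is arbitrarily small, and d can be chosen so that the Taylor series Σ δ_ν z^ν of Ã/B̃ at 0 satisfies det H_q(δ_{p−q+1}) ≠ 0, whence Ã/B̃ ∈ D_{p,q} and [p/q]_{Ã/B̃} = Ã/B̃. -/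
/-!
For small `c` and `d` the perturbed quotient `Ã/B̃` is uniformly close to `A/B` on the compact
set `K ∪ L`, by joint continuity in `(c, d, z)` and a tube-lemma argument. For fixed `c` the
Taylor coefficients of `Ã/B̃` are `α + d • σ`, where `α` and `σ` are the coefficients of `A/B̃`
and of `z ^ p / B̃`; hence the Hankel determinant is a polynomial in `d` whose coefficient of
`d ^ q` is `det H_q(σ)`. That Hankel matrix is anti-triangular with `1 / B(0)` on the
anti-diagonal, so the determinant vanishes for only finitely many `d`, and a small nonzero `d`
avoiding them exists. Finally `Ã/B̃`, normalized by `B̃(0)`, is its own Padé approximant.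
-/

open Polynomial Filter Topology

theorem HasFPowerSeriesAt.coeff_eq_of_hasSum {𝕜 E : Type*} [NontriviallyNormedField 𝕜]
    [NormedAddCommGroup E] [NormedSpace 𝕜 E] {f : 𝕜 → E} {ps : FormalMultilinearSeries 𝕜 𝕜 E}
    {x : 𝕜} {γ : ℕ → E} (hps : HasFPowerSeriesAt f ps x)
    (hγ : ∀ᶠ z in 𝓝 0, HasSum (fun n => z ^ n • γ n) (f (x + z))) : ps.coeff = γ := by
  let ps' : FormalMultilinearSeries 𝕜 𝕜 E := fun n =>
    ContinuousMultilinearMap.mkPiRing 𝕜 (Fin n) (γ n)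
  have hcoeff : ps'.coeff = γ := funext fun n => by simp [FormalMultilinearSeries.coeff, ps']
  have hps' : HasFPowerSeriesAt f ps' x := hasFPowerSeriesAt_iff.2 (by rwa [hcoeff])
  rw [hps.eq_formalMultilinearSeries hps', hcoeff]

def shiftSeq {E : Type*} [Zero E] (p : ℕ) (β : ℕ → E) (n : ℕ) : E :=
  if p ≤ n then β (n - p) else 0

theorem HasSum.pow_smul_shiftSeq {𝕜 E : Type*} [NormedField 𝕜] [NormedAddCommGroup E]
    [NormedSpace 𝕜 E] {z : 𝕜} {β : ℕ → E} {s : E} (hs : HasSum (fun n => z ^ n • β n) s) (p : ℕ) :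
    HasSum (fun n => z ^ n • shiftSeq p β n) (z ^ p • s) := by
  have hlow : ∑ i ∈ Finset.range p, z ^ i • shiftSeq p β i = 0 :=
    Finset.sum_eq_zero fun i hi => by
      simp [shiftSeq, (Finset.mem_range.1 hi).not_ge]
  rw [← hasSum_nat_add_iff' p, hlow, sub_zero]
  convert hs.const_smul (z ^ p) using 2 with n
  simp [shiftSeq, pow_add, mul_comm, mul_smul]

theorem padeHankel_add_smul (α σ : ℕ → ℂ) (d : ℂ) (p q : ℕ) :
    padeHankel (α + d • σ) p q = padeHankel α p q + d • padeHankel σ p q := by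
  ext i j
  simp only [padeHankel, Matrix.add_apply, Matrix.smul_apply, Matrix.of_apply]
  split_ifs <;> simp

theorem det_padeHankel_shiftSeq_ne_zero (β : ℕ → ℂ) (hβ : β 0 ≠ 0) (p q : ℕ) :
    (padeHankel (shiftSeq p β) p q).det ≠ 0 := by
  -- Reversing the columns gives a lower triangular matrix with `β 0` on the diagonal.
  set N := (padeHankel (shiftSeq p β) p q).submatrix id Fin.revPerm
  have hN : ∀ i j : Fin q, N i j = if (j : ℕ) ≤ i then β (i - j) else 0 := by
    intro i j
    simp only [N, padeHankel, shiftSeq, Matrix.submatrix_apply, id, Matrix.of_apply,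
      Fin.revPerm_apply, Fin.val_rev]
    have := j.isLt
    split_ifs <;> first | rfl | omega | (congr 1; omega)
  have hlower : N.IsLowerTriangular := fun i j hij => by
    rw [hN, if_neg (by simp at hij; omega)]
  have hdetN : N.det = β 0 ^ q := by
    simp [Matrix.det_of_isLowerTriangular N hlower, hN]
  have hperm : N.det = _ := Matrix.det_permute' Fin.revPerm _
  rw [hdetN] at hperm
  exact right_ne_zero_of_mul (hperm ▸ pow_ne_zero q hβ)

theorem Matrix.finite_setOf_det_add_smul_eq_zero {K n : Type*} [Field K] [Fintype n]
    [DecidableEq n] (M N : Matrix n n K) (hN : N.det ≠ 0) :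
    {d : K | (M + d • N).det = 0}.Finite := by
  -- `det (M + d • N)` is a polynomial in `d` with coefficient `det N` at `d ^ card n`.
  have hP : ((X : K[X]) • N.map C + M.map C).det ≠ 0 := fun h => hN <| by
    rw [← coeff_det_X_add_C_card N M, h, coeff_zero]
  refine (finite_setOfPred_isRoot hP).subset fun d hd => ?_
  change IsRoot _ d
  rw [IsRoot.def, ← coe_evalRingHom, RingHom.map_det, ← (hd : (M + d • N).det = 0), add_comm]
  congr 1
  ext i j
  simp only [RingHom.mapMatrix_apply, Matrix.map_apply, Matrix.add_apply, Matrix.smul_apply,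
    smul_eq_mul, coe_evalRingHom, eval_add, eval_mul, eval_C, eval_X]

theorem HasFPowerSeriesAt.coeff_add_smul_pow_smul {𝕜 E : Type*} [NontriviallyNormedField 𝕜]
    [NormedAddCommGroup E] [NormedSpace 𝕜 E] {f g : 𝕜 → E}
    {pf pg ps : FormalMultilinearSeries 𝕜 𝕜 E} (hf : HasFPowerSeriesAt f pf 0)
    (hg : HasFPowerSeriesAt g pg 0) (d : 𝕜) (p : ℕ)
    (hps : HasFPowerSeriesAt (fun z => f z + d • z ^ p • g z) ps 0) :
    ps.coeff = pf.coeff + d • shiftSeq p pg.coeff := by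
  refine hps.coeff_eq_of_hasSum ?_
  filter_upwards [hasFPowerSeriesAt_iff.1 hf, hasFPowerSeriesAt_iff.1 hg] with z hfz hgz
  simpa [smul_add, smul_comm d] using hfz.add ((hgz.pow_smul_shiftSeq p).const_smul d)

theorem eventually_cofinite_det_padeHankel_ne_zero (A D : ℂ[X]) (hD : D.eval 0 ≠ 0) (p q : ℕ) :
    ∀ᶠ d in cofinite, ∃ ps : FormalMultilinearSeries ℂ ℂ ℂ,
      HasFPowerSeriesAt (fun z => (A + C d * X ^ p).eval z / D.eval z) ps 0 ∧
      (padeHankel ps.coeff p q).det ≠ 0 := by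
  have analytic (P : ℂ[X]) : AnalyticAt ℂ (fun z => P.eval z) 0 :=
    AnalyticOnNhd.eval_polynomial P 0 trivial
  have hD_an := analytic D
  obtain ⟨pf, hf⟩ : AnalyticAt ℂ (fun z => A.eval z / D.eval z) 0 := (analytic A).div hD_an hD
  obtain ⟨pg, hg⟩ : AnalyticAt ℂ (fun z => 1 / D.eval z) 0 :=
    analyticAt_const.div hD_an hD
  have hg0 : pg.coeff 0 ≠ 0 := by
    simpa [FormalMultilinearSeries.coeff, hg.coeff_zero] using hD
  have hfin := Matrix.finite_setOf_det_add_smul_eq_zero (padeHankel pf.coeff p q) _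
    (det_padeHankel_shiftSeq_ne_zero _ hg0 p q)
  filter_upwards [hfin.compl_mem_cofinite] with d hd
  obtain ⟨ps, hps⟩ : AnalyticAt ℂ (fun z => (A + C d * X ^ p).eval z / D.eval z) 0 :=
    (analytic _).div hD_an hD
  refine ⟨ps, hps, ?_⟩
  have hfun : (fun z => (A + C d * X ^ p).eval z / D.eval z)
      = fun z => A.eval z / D.eval z + d • z ^ p • (1 / D.eval z) := by
    funext z
    simp only [eval_add, eval_mul, eval_C, eval_pow, eval_X, smul_eq_mul]
    ring
  rw [hfun] at hps
  rw [hf.coeff_add_smul_pow_smul hg d p hps, padeHankel_add_smul]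
  exact hd

theorem isPadeApprox_C_inv_mul {N D : ℂ[X]} {p q : ℕ} (hN : N.natDegree ≤ p)
    (hD : D.natDegree ≤ q) (hD0 : D.eval 0 ≠ 0) {ps : FormalMultilinearSeries ℂ ℂ ℂ}
    (hps : HasFPowerSeriesAt (fun z => N.eval z / D.eval z) ps 0) :
    IsPadeApprox ps.coeff p q (C (D.eval 0)⁻¹ * N) (C (D.eval 0)⁻¹ * D) := by
  refine ⟨(natDegree_C_mul_le _ _).trans hN, (natDegree_C_mul_le _ _).trans hD, ?_, ps, ?_,
    fun _ _ => rfl⟩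
  · rw [coeff_C_mul, coeff_zero_eq_eval_zero, inv_mul_cancel₀ hD0]
  · simpa only [eval_mul, eval_C, mul_div_mul_left _ _ (inv_ne_zero hD0)] using hps

theorem eventually_perturbed_denom_ne_zero_and_div_close (A B : ℂ[X]) {S : Set ℂ} (hS : IsCompact S)
    (hB : ∀ z ∈ S, B.eval z ≠ 0) (p : ℕ) {q : ℕ} (hq : q ≠ 0) {a : ℝ} (ha : 0 < a) :
    ∀ᶠ c in 𝓝 0, ∀ᶠ d in 𝓝 0, ∀ z ∈ S, (B + (C c * X) ^ q).eval z ≠ 0 ∧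
      ‖(A + C d * X ^ p).eval z / (B + (C c * X) ^ q).eval z - A.eval z / B.eval z‖ < a := by
  simp only [eval_add, eval_mul, eval_pow, eval_C, eval_X]
  have key : ∀ᶠ w : ℂ × ℂ in 𝓝 0, ∀ z ∈ S, B.eval z + (w.1 * z) ^ q ≠ 0 ∧
      ‖(A.eval z + w.2 * z ^ p) / (B.eval z + (w.1 * z) ^ q) - A.eval z / B.eval z‖ < a := by
    refine hS.eventually_forall_of_forall_eventually fun z hz => ?_
    have hden : ContinuousAt (fun w : (ℂ × ℂ) × ℂ => B.eval w.2 + (w.1.1 * w.2) ^ q) (0, z) :=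
      by fun_prop
    have hden0 : B.eval z + ((0 : ℂ × ℂ).1 * z) ^ q ≠ 0 := by simpa [hq] using hB z hz
    have hdiff : ContinuousAt (fun w : (ℂ × ℂ) × ℂ => (A.eval w.2 + w.1.2 * w.2 ^ p) /
        (B.eval w.2 + (w.1.1 * w.2) ^ q) - A.eval w.2 / B.eval w.2) (0, z) :=
      ((by fun_prop : ContinuousAt _ _).div hden hden0).sub
        ((by fun_prop : ContinuousAt _ _).div (by fun_prop) (hB z hz))
    filter_upwards [hden.eventually_ne hden0,
      hdiff.norm.eventually (gt_mem_nhds (by simpa [hq, hB z hz] using ha))] with w hw1 hw2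
    exact ⟨hw1, hw2⟩
  rw [show (0 : ℂ × ℂ) = (0, 0) from rfl, nhds_prod_eq] at key
  exact key.curry

open Polynomial in
theorem key_lemma_6_1_construction (A B : Polynomial ℂ) (hB0 : B.eval 0 ≠ 0)
    (K L : Set ℂ) (hKL : IsCompact (K ∪ L)) (hBKL : ∀ z ∈ K ∪ L, B.eval z ≠ 0)
    (p q : ℕ) (hp : A.natDegree < p) (hq : B.natDegree < q) :
    ∀ ε > (0:ℝ), ∀ a > (0:ℝ), ∃ c d : ℂ, c ≠ 0 ∧ d ≠ 0 ∧ ‖c‖ < ε ∧ ‖d‖ < ε ∧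
      (∀ z ∈ K ∪ L ∪ {0}, (B + (C c * X) ^ q).eval z ≠ 0) ∧
      (∀ z ∈ K ∪ L,
        ‖(A + C d * X ^ p).eval z / (B + (C c * X) ^ q).eval z
          - A.eval z / B.eval z‖ < a) ∧
      ∃ ps : FormalMultilinearSeries ℂ ℂ ℂ,
        HasFPowerSeriesAt
          (fun z => (A + C d * X ^ p).eval z / (B + (C c * X) ^ q).eval z) ps 0 ∧
        (padeHankel ps.coeff p q).det ≠ 0 ∧
        ∃ N D : Polynomial ℂ, IsPadeApprox ps.coeff p q N D ∧
          N * (B + (C c * X) ^ q) = D * (A + C d * X ^ p) := by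
  intro ε hε a ha
  have hq0 : q ≠ 0 := by omega
  have small : ∀ᶠ x in 𝓝[≠] (0 : ℂ), x ≠ 0 ∧ ‖x‖ < ε := by
    filter_upwards [self_mem_nhdsWithin, nhdsWithin_le_nhds (Metric.ball_mem_nhds 0 hε)]
      with x hx0 hxε
    exact ⟨hx0, mem_ball_zero_iff.1 hxε⟩
  obtain ⟨c, hc_close, hc0, hcε⟩ :=
    (((eventually_perturbed_denom_ne_zero_and_div_close A B hKL hBKL p hq0 ha).filter_mono
      nhdsWithin_le_nhds).and small).exists
  have hBt0 : (B + (C c * X) ^ q).eval 0 ≠ 0 := by simpa [hq0] using hB0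
  obtain ⟨d, ⟨hd_close, hd0, hdε⟩, ps, hps, hdet⟩ :=
    (((hc_close.filter_mono nhdsWithin_le_nhds).and small).and
      ((eventually_cofinite_det_padeHankel_ne_zero A _ hBt0 p q).filter_mono
        (nhdsNE_le_cofinite 0))).exists
  refine ⟨c, d, hc0, hd0, hcε, hdε, ?_, fun z hz => (hd_close z hz).2, ps, hps, hdet, _, _,
    isPadeApprox_C_inv_mul ?_ ?_ hBt0 hps, by ring⟩
  · rintro z (hz | rfl)
    exacts [(hd_close z hz).1, hBt0]
  · exact (natDegree_add_le _ _).trans (max_le hp.le (natDegree_C_mul_X_pow_le _ _))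
  · refine (natDegree_add_le _ _).trans (max_le hq.le ?_)
    rw [mul_pow, ← C_pow]
    exact natDegree_C_mul_X_pow_le _ _
end
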